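/- arXiv:1107.4837 — 7 statements merged into one kernel-verified Lean document; each statement's English description precedes it below -/
import Mathlib

section
/- If p > 1, f : (0,∞) → [0,∞) is measurable with 0 < ∫₀^∞ f(x)^p dx < ∞, and F(x) = ∫₀^x f(t) dt, then ∫₀^∞ (F(x)/x)^p dx ≤ (p/(p-1))^p ∫₀^∞ f(x)^p dx. -/
/-!
Hölder's inequality with the weight `t ^ (1 - 1/p)` bounds `F x ^ p` by
`(p/(p-1)) ^ (p-1) * x ^ ((p-1)^2/p) * ∫₀ˣ f t ^ p * t ^ (1 - 1/p) dt`.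
Dividing by `x ^ p`, integrating in `x` and exchanging the order of integration, the inner
integral `∫ₜ^∞ x ^ (1/p - 2) dx = (p/(p-1)) * t ^ (1/p - 1)` cancels the weight exactly, which
leaves the constant `(p/(p-1)) ^ p`. Lower Lebesgue integrals in `ℝ≥0∞` make every step
free of integrability side conditions.
-/

open MeasureTheory Set
open scoped ENNReal

theorem ENNReal.lintegral_rpow_le_weighted_Lp_mul_Lq {α : Type*} [MeasurableSpace α]
    {μ : Measure α} {p : ℝ} (hp : 1 < p) {f w : α → ℝ≥0∞} (hf : AEMeasurable f μ)
    (hw : AEMeasurable w μ) (hw_ne_zero : ∀ᵐ a ∂μ, w a ≠ 0) (hw_ne_top : ∀ᵐ a ∂μ, w a ≠ ∞) :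
    (∫⁻ a, f a ∂μ) ^ p ≤
      (∫⁻ a, f a ^ p * w a ∂μ) * (∫⁻ a, w a ^ (-(p - 1)⁻¹) ∂μ) ^ (p - 1) := by
  have hp0 : 0 < p := by linarith
  set q := p / (p - 1)
  have hpq : p.HolderConjugate q := .conjExponent hp
  have hf_eq : ∀ᵐ a ∂μ, f a = f a * w a ^ p⁻¹ * w a ^ (-p⁻¹) := by
    filter_upwards [hw_ne_zero, hw_ne_top] with a h0 htop
    rw [mul_assoc, ← ENNReal.rpow_add _ _ h0 htop, add_neg_cancel, ENNReal.rpow_zero, mul_one]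
  have hu : ∀ a, (f a * w a ^ p⁻¹) ^ p = f a ^ p * w a := fun a => by
    rw [ENNReal.mul_rpow_of_nonneg _ _ hp0.le, ← ENNReal.rpow_mul, inv_mul_cancel₀ hp0.ne',
      ENNReal.rpow_one]
  have hv : ∀ a, (w a ^ (-p⁻¹)) ^ q = w a ^ (-(p - 1)⁻¹) := fun a => by
    rw [← ENNReal.rpow_mul]
    congr 1
    simp only [q]
    field_simp
  calc (∫⁻ a, f a ∂μ) ^ p
      = (∫⁻ a, ((fun a => f a * w a ^ p⁻¹) * fun a => w a ^ (-p⁻¹)) a ∂μ) ^ p := by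
        rw [lintegral_congr_ae hf_eq]; rfl
    _ ≤ ((∫⁻ a, (f a * w a ^ p⁻¹) ^ p ∂μ) ^ (1 / p) *
          (∫⁻ a, (w a ^ (-p⁻¹)) ^ q ∂μ) ^ (1 / q)) ^ p :=
        ENNReal.rpow_le_rpow (ENNReal.lintegral_mul_le_Lp_mul_Lq μ hpq
          (hf.mul (hw.pow_const _)) (hw.pow_const _)) hp0.le
    _ = (∫⁻ a, f a ^ p * w a ∂μ) * (∫⁻ a, w a ^ (-(p - 1)⁻¹) ∂μ) ^ (p - 1) := by
        simp only [hu, hv]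
        rw [ENNReal.mul_rpow_of_nonneg _ _ hp0.le, ← ENNReal.rpow_mul, ← ENNReal.rpow_mul,
          one_div_mul_cancel hp0.ne', ENNReal.rpow_one]
        congr 2
        simp only [q]
        field_simp

theorem lintegral_Ioc_ofReal_rpow {a x : ℝ} (ha : -1 < a) (hx : 0 ≤ x) :
    ∫⁻ t in Ioc 0 x, ENNReal.ofReal (t ^ a) = ENNReal.ofReal (x ^ (a + 1) / (a + 1)) := by
  have hint : IntegrableOn (fun t : ℝ => t ^ a) (Ioc 0 x) :=
    (intervalIntegrable_iff_integrableOn_Ioc_of_le hx).mp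
      (intervalIntegral.intervalIntegrable_rpow' ha)
  rw [← ofReal_integral_eq_lintegral_ofReal hint
    ((ae_restrict_mem measurableSet_Ioc).mono fun t ht => Real.rpow_nonneg ht.1.le a),
    ← intervalIntegral.integral_of_le hx, integral_rpow (.inl ha),
    Real.zero_rpow (by linarith), sub_zero]

theorem lintegral_Ici_ofReal_rpow {a t : ℝ} (ha : a < -1) (ht : 0 < t) :
    ∫⁻ x in Ici t, ENNReal.ofReal (x ^ a) = ENNReal.ofReal (-t ^ (a + 1) / (a + 1)) := by
  rw [← restrict_Ioi_eq_restrict_Ici, ← integral_Ioi_rpow_of_lt ha ht,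
    ofReal_integral_eq_lintegral_ofReal (integrableOn_Ioi_rpow_of_lt ha ht)
      ((ae_restrict_mem measurableSet_Ioi).mono fun x hx => Real.rpow_nonneg (ht.trans hx).le a)]

theorem lintegral_Ioi_mul_lintegral_Ioc_swap {a : ℝ} {w h : ℝ → ℝ≥0∞} (hw : Measurable w)
    (hh : Measurable h) :
    ∫⁻ x in Ioi a, w x * ∫⁻ t in Ioc a x, h t = ∫⁻ t in Ioi a, h t * ∫⁻ x in Ici t, w x := by
  set K : ℝ × ℝ → ℝ≥0∞ := {z | z.2 ≤ z.1}.indicator fun z => w z.1 * h z.2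
  have hK : Measurable K := ((hw.comp measurable_fst).mul (hh.comp measurable_snd)).indicator
    (measurableSet_le measurable_snd measurable_fst)
  have hx : ∀ x, w x * ∫⁻ t in Ioc a x, h t = ∫⁻ t in Ioi a, K (x, t) := fun x => by
    rw [← Ioi_inter_Iic, inter_comm, ← Measure.restrict_restrict measurableSet_Iic,
      ← lintegral_indicator measurableSet_Iic,
      ← lintegral_const_mul _ (hh.indicator measurableSet_Iic)]
    congr 1 with t
    by_cases htx : t ≤ x <;> simp [K, indicator, htx]
  have ht : ∀ t ∈ Ioi a, h t * ∫⁻ x in Ici t, w x = ∫⁻ x in Ioi a, K (x, t) := fun t ht => by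
    rw [← inter_eq_left.mpr (Ici_subset_Ioi.mpr ht), ← Measure.restrict_restrict measurableSet_Ici,
      ← lintegral_indicator measurableSet_Ici,
      ← lintegral_const_mul _ (hw.indicator measurableSet_Ici)]
    congr 1 with x
    by_cases htx : t ≤ x <;> simp [K, indicator, htx, mul_comm]
  rw [lintegral_congr hx, setLIntegral_congr_fun measurableSet_Ioi ht]
  exact lintegral_lintegral_swap hK.aemeasurable

theorem lintegral_Ioc_zero_rpow_le {p x : ℝ} (hp : 1 < p) (hx : 0 < x) {g : ℝ → ℝ≥0∞}
    (hg : AEMeasurable g (volume.restrict (Ioc 0 x))) :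
    (∫⁻ t in Ioc 0 x, g t) ^ p ≤ (∫⁻ t in Ioc 0 x, g t ^ p * ENNReal.ofReal (t ^ (1 - p⁻¹))) *
      ENNReal.ofReal (x ^ (1 - p⁻¹) / (1 - p⁻¹)) ^ (p - 1) := by
  have hp1 : p - 1 ≠ 0 := by linarith
  have hw_pos : ∀ᵐ t ∂volume.restrict (Ioc 0 x), 0 < (t ^ (1 - p⁻¹) : ℝ) :=
    (ae_restrict_mem measurableSet_Ioc).mono fun t ht => Real.rpow_pos_of_pos ht.1 _
  have hw_rpow : ∀ᵐ t ∂volume.restrict (Ioc 0 x),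
      ENNReal.ofReal (t ^ (1 - p⁻¹)) ^ (-(p - 1)⁻¹) = ENNReal.ofReal (t ^ (-p⁻¹)) := by
    filter_upwards [ae_restrict_mem measurableSet_Ioc, hw_pos] with t ht htw
    rw [ENNReal.ofReal_rpow_of_pos htw, ← Real.rpow_mul ht.1.le]
    congr 2
    field_simp
  have hw_lintegral : ∫⁻ t in Ioc 0 x, ENNReal.ofReal (t ^ (-p⁻¹)) =
      ENNReal.ofReal (x ^ (1 - p⁻¹) / (1 - p⁻¹)) := by
    have hp_inv : p⁻¹ < 1 := inv_lt_one_of_one_lt₀ hp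
    rw [lintegral_Ioc_ofReal_rpow (by linarith) hx.le, neg_add_eq_sub]
  refine (ENNReal.lintegral_rpow_le_weighted_Lp_mul_Lq hp hg
    (w := fun t => ENNReal.ofReal (t ^ (1 - p⁻¹))) (by fun_prop)
    (hw_pos.mono fun _ ht => (ENNReal.ofReal_pos.mpr ht).ne')
    (.of_forall fun _ => ENNReal.ofReal_ne_top)).trans_eq ?_
  rw [lintegral_congr_ae hw_rpow, hw_lintegral]

theorem lintegral_Ioc_zero_div_rpow_le {p x : ℝ} (hp : 1 < p) (hx : 0 < x) {g : ℝ → ℝ≥0∞}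
    (hg : AEMeasurable g (volume.restrict (Ioc 0 x))) :
    ((∫⁻ t in Ioc 0 x, g t) / ENNReal.ofReal x) ^ p ≤
      ENNReal.ofReal ((1 - p⁻¹) ^ (1 - p)) *
        (ENNReal.ofReal (x ^ (p⁻¹ - 2)) *
          ∫⁻ t in Ioc 0 x, g t ^ p * ENNReal.ofReal (t ^ (1 - p⁻¹))) := by
  have hp0 : 0 < p := by linarith
  set r := 1 - p⁻¹ with hr_def
  have hr : 0 < r := sub_pos.mpr (inv_lt_one_of_one_lt₀ hp)
  have hxr : 0 ≤ x ^ r := Real.rpow_nonneg hx.le r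
  have hexp : p⁻¹ - 2 = r * (p - 1) - p := by
    rw [hr_def]
    field_simp
    ring
  have hweight : ENNReal.ofReal (x ^ r / r) ^ (p - 1) / ENNReal.ofReal x ^ p =
      ENNReal.ofReal (r ^ (1 - p)) * ENNReal.ofReal (x ^ (p⁻¹ - 2)) := by
    rw [ENNReal.ofReal_rpow_of_nonneg (div_nonneg hxr hr.le) (by linarith),
      ENNReal.ofReal_rpow_of_nonneg hx.le hp0.le,
      ← ENNReal.ofReal_div_of_pos (Real.rpow_pos_of_pos hx p),
      ← ENNReal.ofReal_mul (Real.rpow_nonneg hr.le _)]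
    congr 1
    rw [hexp, Real.rpow_sub hx (r * (p - 1)) p, show 1 - p = -(p - 1) by ring,
      Real.rpow_neg hr.le, Real.div_rpow hxr hr.le, ← Real.rpow_mul hx.le]
    ring
  rw [ENNReal.div_rpow_of_nonneg _ _ hp0.le]
  refine (ENNReal.div_le_div_right (lintegral_Ioc_zero_rpow_le hp hx hg) _).trans_eq ?_
  rw [mul_div_assoc, hweight]
  ring

theorem hardy_lintegral_inequality {p : ℝ} (hp : 1 < p) {g : ℝ → ℝ≥0∞} (hg : Measurable g) :
    ∫⁻ x in Ioi 0, ((∫⁻ t in Ioc 0 x, g t) / ENNReal.ofReal x) ^ p ≤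
      ENNReal.ofReal ((p / (p - 1)) ^ p) * ∫⁻ x in Ioi 0, g x ^ p := by
  set r := 1 - p⁻¹ with hr_def
  have hr : 0 < r := sub_pos.mpr (inv_lt_one_of_one_lt₀ hp)
  have hinner : ∀ t ∈ Ioi (0 : ℝ),
      g t ^ p * ENNReal.ofReal (t ^ r) * ∫⁻ x in Ici t, ENNReal.ofReal (x ^ (p⁻¹ - 2)) =
        ENNReal.ofReal r⁻¹ * g t ^ p := by
    intro t ht
    rw [lintegral_Ici_ofReal_rpow (by linarith [inv_lt_one_of_one_lt₀ hp]) ht,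
      show p⁻¹ - 2 + 1 = -r by rw [hr_def]; ring, mul_assoc,
      ← ENNReal.ofReal_mul (Real.rpow_nonneg ht.le _), mul_comm, neg_div_neg_eq, mul_div_assoc',
      ← Real.rpow_add ht, add_neg_cancel, Real.rpow_zero, one_div]
  have hconst : r ^ (1 - p) * r⁻¹ = (p / (p - 1)) ^ p := by
    rw [← Real.rpow_neg_one, ← Real.rpow_add hr, show 1 - p + -1 = -p by ring,
      Real.rpow_neg hr.le, ← Real.inv_rpow hr.le, hr_def]
    congr 1
    field_simp
  calc ∫⁻ x in Ioi 0, ((∫⁻ t in Ioc 0 x, g t) / ENNReal.ofReal x) ^ p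
      ≤ ∫⁻ x in Ioi 0, ENNReal.ofReal (r ^ (1 - p)) *
          (ENNReal.ofReal (x ^ (p⁻¹ - 2)) * ∫⁻ t in Ioc 0 x, g t ^ p * ENNReal.ofReal (t ^ r)) :=
        setLIntegral_mono' measurableSet_Ioi fun x hx =>
          lintegral_Ioc_zero_div_rpow_le hp hx hg.aemeasurable
    _ = ENNReal.ofReal (r ^ (1 - p)) * ∫⁻ t in Ioi 0,
          g t ^ p * ENNReal.ofReal (t ^ r) * ∫⁻ x in Ici t, ENNReal.ofReal (x ^ (p⁻¹ - 2)) := by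
        rw [lintegral_const_mul' _ _ ENNReal.ofReal_ne_top,
          lintegral_Ioi_mul_lintegral_Ioc_swap (by fun_prop) (by fun_prop)]
    _ = ENNReal.ofReal ((p / (p - 1)) ^ p) * ∫⁻ x in Ioi 0, g x ^ p := by
        rw [setLIntegral_congr_fun measurableSet_Ioi hinner,
          lintegral_const_mul' _ _ ENNReal.ofReal_ne_top, ← mul_assoc,
          ← ENNReal.ofReal_mul (Real.rpow_nonneg hr.le _), hconst]

theorem hardy_integral_inequality_general
    (p : ℝ) (hp : 1 < p)
    (f : ℝ → ℝ) (hf_meas : Measurable f)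
    (hf_nonneg : ∀ x, 0 ≤ f x)
    (hf_int : IntegrableOn (fun x => f x ^ p) (Ioi (0:ℝ)))
    (F : ℝ → ℝ) (hF : ∀ x, F x = ∫ t in (0:ℝ)..x, f t) :
    ∫⁻ x in Ioi (0:ℝ), ENNReal.ofReal ((F x / x) ^ p)
      ≤ ENNReal.ofReal ((p / (p - 1)) ^ p * ∫ x in Ioi (0:ℝ), f x ^ p) := by
  have hp0 : 0 < p := by linarith
  have hF_le : ∀ x ∈ Ioi (0 : ℝ), ENNReal.ofReal ((F x / x) ^ p) ≤
      ((∫⁻ t in Ioc 0 x, ENNReal.ofReal (f t)) / ENNReal.ofReal x) ^ p := by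
    intro x (hx : 0 < x)
    have hF_nonneg : 0 ≤ F x := hF x ▸ intervalIntegral.integral_nonneg hx.le fun t _ => hf_nonneg t
    rw [← ENNReal.ofReal_rpow_of_nonneg (div_nonneg hF_nonneg hx.le) hp0.le,
      ENNReal.ofReal_div_of_pos hx, hF x, intervalIntegral.integral_of_le hx.le,
      integral_eq_lintegral_of_nonneg_ae (.of_forall hf_nonneg) hf_meas.aestronglyMeasurable]
    gcongr
    exact ENNReal.ofReal_toReal_le
  have hf_rpow :
      ∫⁻ x in Ioi 0, ENNReal.ofReal (f x) ^ p = ENNReal.ofReal (∫ x in Ioi 0, f x ^ p) := by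
    rw [ofReal_integral_eq_lintegral_ofReal hf_int
      (.of_forall fun x => Real.rpow_nonneg (hf_nonneg x) p)]
    simp_rw [ENNReal.ofReal_rpow_of_nonneg (hf_nonneg _) hp0.le]
  calc ∫⁻ x in Ioi 0, ENNReal.ofReal ((F x / x) ^ p)
      ≤ ∫⁻ x in Ioi 0, ((∫⁻ t in Ioc 0 x, ENNReal.ofReal (f t)) / ENNReal.ofReal x) ^ p :=
        setLIntegral_mono' measurableSet_Ioi hF_le
    _ ≤ ENNReal.ofReal ((p / (p - 1)) ^ p) * ∫⁻ x in Ioi 0, ENNReal.ofReal (f x) ^ p :=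
        hardy_lintegral_inequality hp hf_meas.ennreal_ofReal
    _ = ENNReal.ofReal ((p / (p - 1)) ^ p * ∫ x in Ioi 0, f x ^ p) := by
        rw [hf_rpow, ENNReal.ofReal_mul (by positivity)]

theorem hardy_integral_inequality
    (p : ℝ) (hp : 1 < p)
    (f : ℝ → ℝ) (hf_meas : Measurable f)
    (hf_nonneg : ∀ x, 0 ≤ f x)
    (hf_int : IntegrableOn (fun x => f x ^ p) (Ioi (0:ℝ)))
    (hf_pos : 0 < ∫ x in Ioi (0:ℝ), f x ^ p)
    (F : ℝ → ℝ) (hF : ∀ x, F x = ∫ t in (0:ℝ)..x, f t) :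
    ∫⁻ x in Ioi (0:ℝ), ENNReal.ofReal ((F x / x) ^ p)
      ≤ ENNReal.ofReal ((p / (p - 1)) ^ p * ∫ x in Ioi (0:ℝ), f x ^ p) :=
  hardy_integral_inequality_general p hp f hf_meas hf_nonneg hf_int F hF
end

section
/- If p > 1 and (aₙ) is a sequence of nonnegative reals with 0 < ∑ₙ aₙ^p < ∞, and Aₙ = a₁ + ⋯ + aₙ, then ∑ₙ (Aₙ/n)^p ≤ (p/(p-1))^p ∑ₙ aₙ^p. -/
/-!
Write `α n = Aₙ / (n + 1)`, so that `aₙ = (n + 1) αₙ - n αₙ₋₁`. Young's inequality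
`p αₙ^(p-1) αₙ₋₁ ≤ (p - 1) αₙ^p + αₙ₋₁^p` turns `(p - 1) αₙ^p - p αₙ^(p-1) aₙ` into a bound by the
telescoping difference `n αₙ₋₁^p - (n + 1) αₙ^p`, hence
`∑_{n<N} αₙ^p ≤ p/(p-1) ∑_{n<N} αₙ^(p-1) aₙ`. Hölder's inequality bounds the right-hand side by
`p/(p-1) (∑ αₙ^p)^(1 - 1/p) (∑ aₙ^p)^(1/p)`; dividing out gives the finite Hardy inequality,
and the infinite one follows by taking the supremum over `N`.
-/

open Finset Real

noncomputable def cesaroMean (a : ℕ → ℝ) (n : ℕ) : ℝ := (∑ i ∈ range (n + 1), a i) / (n + 1)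

lemma cesaroMean_nonneg {a : ℕ → ℝ} (ha : ∀ n, 0 ≤ a n) (n : ℕ) : 0 ≤ cesaroMean a n :=
  div_nonneg (sum_nonneg fun i _ => ha i) (by positivity)

lemma succ_mul_cesaroMean (a : ℕ → ℝ) (n : ℕ) :
    ((n : ℝ) + 1) * cesaroMean a n = ∑ i ∈ range (n + 1), a i :=
  mul_div_cancel₀ _ (by positivity)

-- At `n = 0` the truncated `n - 1` is harmless: its coefficient is `0`.
lemma eq_succ_mul_cesaroMean_sub (a : ℕ → ℝ) (n : ℕ) :
    a n = ((n : ℝ) + 1) * cesaroMean a n - n * cesaroMean a (n - 1) := by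
  cases n with
  | zero => simp [cesaroMean]
  | succ m =>
    rw [succ_mul_cesaroMean, Nat.add_sub_cancel, Nat.cast_succ, succ_mul_cesaroMean,
      sum_range_succ _ (m + 1)]
    ring

lemma rpow_sub_one_mul_self {p x : ℝ} (hp : 1 ≤ p) (hx : 0 ≤ x) : x ^ (p - 1) * x = x ^ p := by
  rw [← rpow_add_one' hx (by linarith), sub_add_cancel]

lemma mul_rpow_sub_one_mul_le {p x z : ℝ} (hp : 1 ≤ p) (hx : 0 ≤ x) (hz : 0 ≤ z) :
    p * (x ^ (p - 1) * z) ≤ (p - 1) * x ^ p + z ^ p := by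
  have hp0 : p ≠ 0 := by positivity
  have hamgm := geom_mean_le_arith_mean2_weighted (sub_nonneg.2 (inv_le_one_of_one_le₀ hp))
    (inv_nonneg.2 (by positivity)) (rpow_nonneg hx p) (rpow_nonneg hz p) (sub_add_cancel 1 p⁻¹)
  rw [← rpow_mul hx, ← rpow_mul hz, mul_sub, mul_inv_cancel₀ hp0, mul_one, rpow_one] at hamgm
  calc p * (x ^ (p - 1) * z) ≤ p * ((1 - p⁻¹) * x ^ p + p⁻¹ * z ^ p) := by gcongr
    _ = (p - 1) * x ^ p + z ^ p := by field_simp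

lemma sub_one_mul_rpow_sub_le {p c x z : ℝ} (hp : 1 ≤ p) (hc : 0 ≤ c) (hx : 0 ≤ x) (hz : 0 ≤ z) :
    (p - 1) * x ^ p - p * (x ^ (p - 1) * ((c + 1) * x - c * z))
      ≤ c * z ^ p - (c + 1) * x ^ p := by
  have hyoung := mul_le_mul_of_nonneg_left (mul_rpow_sub_one_mul_le hp hx hz) hc
  have hexpand : x ^ (p - 1) * ((c + 1) * x - c * z)
      = (c + 1) * x ^ p - c * (x ^ (p - 1) * z) := by
    rw [← rpow_sub_one_mul_self hp hx]; ring
  rw [hexpand]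
  linear_combination hyoung

lemma sub_one_mul_sum_rpow_le {p : ℝ} (hp : 1 ≤ p) {a α : ℕ → ℝ} (hα : ∀ n, 0 ≤ α n)
    (hrec : ∀ n : ℕ, a n = ((n : ℝ) + 1) * α n - n * α (n - 1)) (N : ℕ) :
    (p - 1) * ∑ n ∈ range N, α n ^ p ≤ p * ∑ n ∈ range N, α n ^ (p - 1) * a n := by
  set B : ℕ → ℝ := fun n => n * α (n - 1) ^ p
  have hstep (n : ℕ) : (p - 1) * α n ^ p - p * (α n ^ (p - 1) * a n) ≤ B n - B (n + 1) := by
    simpa [B, hrec n] using sub_one_mul_rpow_sub_le hp n.cast_nonneg (hα n) (hα (n - 1))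
  have htelescope := sum_le_sum fun n (_ : n ∈ range N) => hstep n
  rw [sum_range_sub', sum_sub_distrib, ← mul_sum, ← mul_sum] at htelescope
  have hB0 : B 0 = 0 := by simp [B]
  have hBN : 0 ≤ B N := mul_nonneg N.cast_nonneg (rpow_nonneg (hα _) p)
  linarith

lemma le_rpow_mul_of_le_mul_rpow_mul_rpow {p q s t C : ℝ} (hpq : p.HolderConjugate q)
    (hs : 0 ≤ s) (ht : 0 ≤ t) (hC : 0 ≤ C) (h : s ≤ C * (s ^ (1 / q) * t ^ (1 / p))) :
    s ≤ C ^ p * t := by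
  rcases hs.eq_or_lt with rfl | hs
  · positivity
  have hsplit : s = s ^ (1 / q) * s ^ (1 / p) := by
    rw [← rpow_add hs, add_comm, hpq.one_div_add_one_div, div_one, rpow_one]
  have hroot : s ^ (1 / p) ≤ C * t ^ (1 / p) := by
    refine le_of_mul_le_mul_left ?_ (rpow_pos_of_pos hs (1 / q))
    rw [← hsplit]
    linarith
  calc s = (s ^ (1 / p)) ^ p := by rw [← rpow_mul hs.le, one_div_mul_cancel hpq.ne_zero, rpow_one]
    _ ≤ (C * t ^ (1 / p)) ^ p := rpow_le_rpow (by positivity) hroot hpq.nonneg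
    _ = C ^ p * t := by
      rw [mul_rpow hC (by positivity), ← rpow_mul ht, one_div_mul_cancel hpq.ne_zero, rpow_one]

theorem sum_rpow_cesaroMean_le {p q : ℝ} (hpq : p.HolderConjugate q) {a : ℕ → ℝ}
    (ha : ∀ n, 0 ≤ a n) (N : ℕ) :
    ∑ n ∈ range N, cesaroMean a n ^ p ≤ q ^ p * ∑ n ∈ range N, a n ^ p := by
  have hα := cesaroMean_nonneg ha
  have hholder : ∑ n ∈ range N, cesaroMean a n ^ (p - 1) * a n
      ≤ (∑ n ∈ range N, cesaroMean a n ^ p) ^ (1 / q) * (∑ n ∈ range N, a n ^ p) ^ (1 / p) := by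
    simpa [← rpow_mul (hα _), hpq.sub_one_mul_conj] using
      inner_le_Lp_mul_Lq_of_nonneg (range N) hpq.symm (fun n _ => rpow_nonneg (hα n) (p - 1))
        (fun n _ => ha n)
  have htelescope := sub_one_mul_sum_rpow_le hpq.lt.le hα (eq_succ_mul_cesaroMean_sub a) N
  refine le_rpow_mul_of_le_mul_rpow_mul_rpow hpq (sum_nonneg fun n _ => rpow_nonneg (hα n) p)
    (sum_nonneg fun n _ => rpow_nonneg (ha n) p) hpq.symm.nonneg
    (le_of_mul_le_mul_left ?_ hpq.sub_one_pos)
  rw [← mul_assoc, hpq.sub_one_mul_conj]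
  exact htelescope.trans (mul_le_mul_of_nonneg_left hholder hpq.nonneg)

theorem discrete_hardy_inequality_general
    (p : ℝ) (hp : 1 < p)
    (a : ℕ → ℝ) (ha : ∀ n, 0 ≤ a n)
    (hsum : Summable (fun n => a n ^ p))
    (A : ℕ → ℝ) (hA : ∀ n, A n = ∑ i ∈ Finset.range (n + 1), a i) :
    ∑' n : ℕ, ENNReal.ofReal ((A n / ((n : ℝ) + 1)) ^ p)
      ≤ ENNReal.ofReal ((p / (p - 1)) ^ p * ∑' n, a n ^ p) := by
  have hmean (n : ℕ) : A n / ((n : ℝ) + 1) = cesaroMean a n := by rw [hA, cesaroMean]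
  simp only [hmean]
  rw [ENNReal.tsum_eq_iSup_nat]
  refine iSup_le fun N => ?_
  rw [← ENNReal.ofReal_sum_of_nonneg fun n _ => rpow_nonneg (cesaroMean_nonneg ha n) p]
  refine ENNReal.ofReal_le_ofReal ?_
  calc ∑ n ∈ range N, cesaroMean a n ^ p
      ≤ (p / (p - 1)) ^ p * ∑ n ∈ range N, a n ^ p :=
        sum_rpow_cesaroMean_le (HolderConjugate.conjExponent hp) ha N
    _ ≤ (p / (p - 1)) ^ p * ∑' n, a n ^ p := by
      gcongr
      exact hsum.sum_le_tsum _ fun n _ => rpow_nonneg (ha n) p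

theorem discrete_hardy_inequality
    (p : ℝ) (hp : 1 < p)
    (a : ℕ → ℝ) (ha : ∀ n, 0 ≤ a n)
    (hsum : Summable (fun n => a n ^ p))
    (hpos : 0 < ∑' n, a n ^ p)
    (A : ℕ → ℝ) (hA : ∀ n, A n = ∑ i ∈ Finset.range (n + 1), a i) :
    ∑' n : ℕ, ENNReal.ofReal ((A n / ((n : ℝ) + 1)) ^ p)
      ≤ ENNReal.ofReal ((p / (p - 1)) ^ p * ∑' n, a n ^ p) :=
  discrete_hardy_inequality_general p hp a ha hsum A hA
end

section
/- Let p > 1, 1/p + 1/q = 1, λ > 0, r, s > 0 with r + s = λ. Let k : (0,∞)² → (0,∞) be measurable and homogeneous of degree -λ with k_λ(r) = ∫₀^∞ k(u,1) u^{r-1} du finite and positive, and assume u ↦ k(u,1) u^{r-1} and u ↦ k(1,u) u^{s-1} are decreasing on (0,∞). Let (aₙ), (bₙ) be nonnegative sequences with 0 < ∑ aₙ^p < ∞ and 0 < ∑ bₙ^q < ∞, and Aₙ = a₁+⋯+aₙ, Bₙ = b₁+⋯+bₙ. Then ∑ₙ ∑ₘ m^{r - 1/q - 1} n^{s - 1/p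 - 1} k(m,n) Aₘ Bₙ ≤ p q k_λ(r) (∑ aₙ^p)^{1/p} (∑ bₙ^q)^{1/q}. -/
/-!
Split the `(m, n)` term as `X · Y` with
`X = (k(m,n) n^(s-1) m^r)^(1/p) · A_m/m` and `Y = (k(m,n) m^(r-1) n^s)^(1/q) · B_n/n`,
and apply Hölder's inequality on `ℕ × ℕ`. By homogeneity, `∑ₘ k(m,n) m^(r-1)` is a lower
Riemann sum of the decreasing function `u ↦ k(u,n) u^(r-1)`, hence at most `k_λ(r) n^(-s)`;
so `∑ Y^q ≤ k_λ(r) ∑ₙ (B_n/n)^q ≤ k_λ(r) p^q ∑ bₙ^q` by Hardy's inequality. The same argument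
with the variables exchanged bounds `∑ X^p`, since the substitution `u ↦ 1/u` turns
`∫₀^∞ k(1,u) u^(s-1) du` into `k_λ(r)`. For Hardy's inequality, Young's inequality bounds
`(A_m/m)^p - q aₘ (A_m/m)^(p-1)` by a telescoping difference, so
`∑ (A_m/m)^p ≤ q ∑ aₘ (A_m/m)^(p-1)`, and Hölder's inequality finishes.
-/

open MeasureTheory Set
open scoped ENNReal

theorem ENNReal.inner_le_Lp_mul_Lq_tsum {ι : Type*} (f g : ι → ℝ≥0∞) {p q : ℝ}
    (hpq : p.HolderConjugate q) :
    ∑' i, f i * g i ≤ (∑' i, f i ^ p) ^ (1 / p) * (∑' i, g i ^ q) ^ (1 / q) := by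
  let _ : MeasurableSpace ι := ⊤
  simpa only [lintegral_count, Pi.mul_apply] using
    ENNReal.lintegral_mul_le_Lp_mul_Lq (Measure.count : Measure ι) hpq
      measurable_from_top.aemeasurable measurable_from_top.aemeasurable

theorem ENNReal.tsum_tsum_mul_le {ι κ : Type*} (f g : ι → κ → ℝ≥0∞) {p q : ℝ}
    (hpq : p.HolderConjugate q) :
    ∑' i, ∑' j, f i j * g i j
      ≤ (∑' i, ∑' j, f i j ^ p) ^ (1 / p) * (∑' i, ∑' j, g i j ^ q) ^ (1 / q) := by
  have h := ENNReal.inner_le_Lp_mul_Lq_tsum (fun z : ι × κ => f z.1 z.2) (fun z => g z.1 z.2) hpq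
  rwa [ENNReal.tsum_prod (f := fun i j => f i j * g i j),
    ENNReal.tsum_prod (f := fun i j => f i j ^ p),
    ENNReal.tsum_prod (f := fun i j => g i j ^ q)] at h

theorem ENNReal.rpow_one_div_mul_rpow {p : ℝ} (hp : 0 < p) (x y : ℝ≥0∞) :
    (x ^ (1 / p) * y) ^ p = x * y ^ p := by
  rw [ENNReal.mul_rpow_of_nonneg _ _ hp.le, ← ENNReal.rpow_mul, one_div_mul_cancel hp.ne',
    ENNReal.rpow_one]

theorem ENNReal.rpow_one_div_mul_rpow_one_div_eq_ofReal {p q K S T : ℝ}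
    (hpq : p.HolderConjugate q) (hK : 0 ≤ K) (hS : 0 ≤ S) (hT : 0 ≤ T) :
    (ENNReal.ofReal K * (ENNReal.ofReal q ^ p * ENNReal.ofReal S)) ^ (1 / p)
        * (ENNReal.ofReal K * (ENNReal.ofReal p ^ q * ENNReal.ofReal T)) ^ (1 / q)
      = ENNReal.ofReal (p * q * K * S ^ (1 / p) * T ^ (1 / q)) := by
  have hp := hpq.pos
  have hq := hpq.symm.pos
  have hK' : ENNReal.ofReal K ^ (1 / p) * ENNReal.ofReal K ^ (1 / q) = ENNReal.ofReal K := by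
    rw [← ENNReal.rpow_add_of_nonneg _ _ (by positivity) (by positivity),
      hpq.one_div_add_one_div, one_div_one, ENNReal.rpow_one]
  have hpow : ∀ {x : ℝ≥0∞} {t : ℝ}, 0 < t → (x ^ t) ^ (1 / t) = x := fun ht => by
    rw [← ENNReal.rpow_mul, mul_one_div_cancel ht.ne', ENNReal.rpow_one]
  rw [ENNReal.mul_rpow_of_nonneg _ _ (by positivity),
    ENNReal.mul_rpow_of_nonneg _ _ (by positivity),
    ENNReal.mul_rpow_of_nonneg _ _ (by positivity),
    ENNReal.mul_rpow_of_nonneg _ _ (by positivity),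
    hpow hp, hpow hq, ENNReal.ofReal_rpow_of_nonneg hS (by positivity),
    ENNReal.ofReal_rpow_of_nonneg hT (by positivity), ENNReal.ofReal_mul (by positivity),
    ENNReal.ofReal_mul (by positivity), ENNReal.ofReal_mul (by positivity),
    ENNReal.ofReal_mul (by positivity)]
  conv_rhs => rw [← hK']
  ring

theorem Real.le_rpow_of_le_mul_rpow {p q S C : ℝ} (hpq : p.HolderConjugate q) (hS : 0 ≤ S)
    (hC : 0 ≤ C) (h : S ≤ C * S ^ (1 / q)) : S ≤ C ^ p := by
  rcases hS.eq_or_lt with rfl | hS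
  · exact Real.rpow_nonneg hC p
  have hSC : S ^ (1 / p) ≤ C := by
    refine le_of_mul_le_mul_right ?_ (Real.rpow_pos_of_pos hS (1 / q))
    rwa [← Real.rpow_add hS, hpq.one_div_add_one_div, one_div_one, Real.rpow_one]
  calc S = (S ^ (1 / p)) ^ p := by
        rw [← Real.rpow_mul hS.le, one_div_mul_cancel hpq.ne_zero, Real.rpow_one]
    _ ≤ C ^ p := by gcongr; exact hpq.nonneg

theorem AntitoneOn.tsum_ofReal_le_integral {f : ℝ → ℝ} (hf : AntitoneOn f (Ioi 0))
    (hf0 : ∀ x ∈ Ioi (0 : ℝ), 0 ≤ f x) (hfi : IntegrableOn f (Ioi 0)) :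
    ∑' n : ℕ, ENNReal.ofReal (f (n + 1)) ≤ ENNReal.ofReal (∫ x in Ioi 0, f x) := by
  have hdisj : Pairwise (Function.onFun Disjoint fun n : ℕ => Ioc (n : ℝ) (n + 1)) := by
    simpa using Nat.mono_cast.pairwise_disjoint_on_Ioc_succ (β := ℝ)
  have hsub : (⋃ n : ℕ, Ioc (n : ℝ) (n + 1)) ⊆ Ioi 0 :=
    iUnion_subset fun n x hx => (Nat.cast_nonneg n).trans_lt hx.1
  rw [ofReal_integral_eq_lintegral_ofReal hfi
    ((ae_restrict_iff' measurableSet_Ioi).2 (.of_forall hf0))]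
  refine le_trans ?_ (lintegral_mono_set hsub)
  rw [lintegral_iUnion (fun n => measurableSet_Ioc) hdisj]
  refine ENNReal.tsum_le_tsum fun n => ?_
  calc ENNReal.ofReal (f (n + 1))
      = ∫⁻ _ in Ioc (n : ℝ) (n + 1), ENNReal.ofReal (f (n + 1)) := by simp [Real.volume_Ioc]
    _ ≤ ∫⁻ x in Ioc (n : ℝ) (n + 1), ENNReal.ofReal (f x) :=
        setLIntegral_mono' measurableSet_Ioc fun x hx => ENNReal.ofReal_le_ofReal
          (hf ((Nat.cast_nonneg n).trans_lt hx.1) (show (0 : ℝ) < n + 1 by positivity) hx.2)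

theorem AntitoneOn.tsum_ofReal_comp_mul_le {f : ℝ → ℝ} (hf : AntitoneOn f (Ioi 0))
    (hf0 : ∀ x ∈ Ioi (0 : ℝ), 0 ≤ f x) (hfi : IntegrableOn f (Ioi 0)) {b : ℝ}
    (hb : 0 < b) :
    ∑' n : ℕ, ENNReal.ofReal (f (b * (n + 1)))
      ≤ ENNReal.ofReal (b⁻¹ * ∫ x in Ioi 0, f x) := by
  have hmaps : MapsTo (b * ·) (Ioi 0) (Ioi 0) := fun x hx => mul_pos hb hx
  have h := AntitoneOn.tsum_ofReal_le_integral (f := fun x => f (b * x))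
    (hf.comp_MonotoneOn (fun x _ y _ hxy => by gcongr) hmaps) (fun x hx => hf0 _ (hmaps hx))
    (by simpa using (integrableOn_Ioi_comp_mul_left_iff f 0 hb).2 (by simpa using hfi))
  simpa [integral_comp_mul_left_Ioi f 0 hb] using h

namespace Hardy

open Finset

variable {p q : ℝ}

theorem rpow_sub_mul_rpow_sub_one_le (hpq : p.HolderConjugate q) {α β n : ℝ} (hα : 0 ≤ α)
    (hβ : 0 ≤ β) (hn : 0 ≤ n) :
    β ^ p - q * ((n + 1) * β - n * α) * β ^ (p - 1)
      ≤ q / p * (n * α ^ p - (n + 1) * β ^ p) := by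
  have hsplit : β ^ p = β * β ^ (p - 1) := by
    rw [← Real.rpow_one_add' hβ (by linarith [hpq.lt]), add_sub_cancel]
  have young : α * β ^ (p - 1) ≤ α ^ p / p + β ^ p / q := by
    simpa [← Real.rpow_mul hβ, hpq.sub_one_mul_conj] using
      Real.young_inequality_of_nonneg hα (Real.rpow_nonneg hβ (p - 1)) hpq
  have hqp : q / p = q - 1 := by
    field_simp [hpq.pos.ne']
    linarith [hpq.mul_eq_add]
  have young' : q * (α * β ^ (p - 1)) ≤ (q - 1) * α ^ p + β ^ p :=
    calc q * (α * β ^ (p - 1)) ≤ q * (α ^ p / p + β ^ p / q) := by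
          gcongr; exact hpq.symm.nonneg
      _ = q / p * α ^ p + β ^ p := by field_simp [hpq.symm.pos.ne']
      _ = (q - 1) * α ^ p + β ^ p := by rw [hqp]
  rw [hqp]
  linear_combination n * young' + q * (n + 1) * hsplit

noncomputable def partialMean (a : ℕ → ℝ) (m : ℕ) : ℝ :=
  (∑ i ∈ range (m + 1), a i) / (m + 1)

variable {a : ℕ → ℝ}

theorem partialMean_nonneg (ha : ∀ n, 0 ≤ a n) (m : ℕ) : 0 ≤ partialMean a m :=
  div_nonneg (sum_nonneg fun i _ => ha i) (by positivity)

-- At `m = 0` the truncated `m - 1` is harmless: its coefficient `m` vanishes.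
theorem eq_partialMean_sub (m : ℕ) :
    a m = (m + 1) * partialMean a m - m * partialMean a (m - 1) := by
  cases m with
  | zero => simp [partialMean]
  | succ m =>
    simp only [partialMean, Nat.add_sub_cancel, sum_range_succ _ (m + 1)]
    push_cast
    field_simp
    ring

theorem sum_partialMean_rpow_le_mul_sum (hpq : p.HolderConjugate q) (ha : ∀ n, 0 ≤ a n)
    (N : ℕ) :
    ∑ m ∈ range N, partialMean a m ^ p
      ≤ q * ∑ m ∈ range N, a m * partialMean a m ^ (p - 1) := by
  set f : ℕ → ℝ := fun m => m * partialMean a (m - 1) ^ p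
  have hstep : ∀ m, partialMean a m ^ p - q * (a m * partialMean a m ^ (p - 1))
      ≤ q / p * (f m - f (m + 1)) := fun m => by
    rw [eq_partialMean_sub (a := a) m]
    simpa [f, mul_assoc] using rpow_sub_mul_rpow_sub_one_le hpq (partialMean_nonneg ha _)
      (partialMean_nonneg ha m) m.cast_nonneg
  have htel := sum_le_sum fun m (_ : m ∈ range N) => hstep m
  rw [← mul_sum, sum_range_sub', sum_sub_distrib, ← mul_sum] at htel
  have hfN : 0 ≤ q / p * f N :=
    mul_nonneg (div_nonneg hpq.symm.nonneg hpq.nonneg)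
      (mul_nonneg N.cast_nonneg (Real.rpow_nonneg (partialMean_nonneg ha _) p))
  simp only [f, CharP.cast_eq_zero, zero_mul] at htel
  linarith

theorem sum_partialMean_rpow_le (hpq : p.HolderConjugate q) (ha : ∀ n, 0 ≤ a n) (N : ℕ) :
    ∑ m ∈ range N, partialMean a m ^ p ≤ q ^ p * ∑ m ∈ range N, a m ^ p := by
  have hmean := partialMean_nonneg ha
  set S := ∑ m ∈ range N, partialMean a m ^ p
  set T := ∑ m ∈ range N, a m ^ p
  have hT : 0 ≤ T := sum_nonneg fun m _ => Real.rpow_nonneg (ha m) p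
  have holder :
      ∑ m ∈ range N, a m * partialMean a m ^ (p - 1) ≤ T ^ (1 / p) * S ^ (1 / q) := by
    simpa [← Real.rpow_mul (hmean _), hpq.sub_one_mul_conj] using
      Real.inner_le_Lp_mul_Lq_of_nonneg (range N) hpq (fun i _ => ha i)
        (fun i _ => Real.rpow_nonneg (hmean i) (p - 1))
  have key : S ≤ (q * T ^ (1 / p)) ^ p := by
    refine Real.le_rpow_of_le_mul_rpow hpq (sum_nonneg fun m _ => Real.rpow_nonneg (hmean m) p)
      (by have := hpq.symm.nonneg; positivity) ?_
    rw [mul_assoc]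
    exact (sum_partialMean_rpow_le_mul_sum hpq ha N).trans
      (mul_le_mul_of_nonneg_left holder hpq.symm.nonneg)
  rwa [Real.mul_rpow hpq.symm.nonneg (Real.rpow_nonneg hT _), ← Real.rpow_mul hT,
    one_div_mul_cancel hpq.ne_zero, Real.rpow_one] at key

theorem tsum_ofReal_partialMean_rpow_le (hpq : p.HolderConjugate q) (ha : ∀ n, 0 ≤ a n) :
    ∑' m, ENNReal.ofReal (partialMean a m ^ p)
      ≤ ENNReal.ofReal q ^ p * ∑' n, ENNReal.ofReal (a n ^ p) := by
  rw [ENNReal.tsum_eq_iSup_nat]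
  refine iSup_le fun N => ?_
  calc ∑ m ∈ range N, ENNReal.ofReal (partialMean a m ^ p)
      = ENNReal.ofReal (∑ m ∈ range N, partialMean a m ^ p) :=
        (ENNReal.ofReal_sum_of_nonneg fun m _ => Real.rpow_nonneg (partialMean_nonneg ha m) p).symm
    _ ≤ ENNReal.ofReal (q ^ p * ∑ m ∈ range N, a m ^ p) :=
        ENNReal.ofReal_le_ofReal (sum_partialMean_rpow_le hpq ha N)
    _ = ENNReal.ofReal q ^ p * ∑ m ∈ range N, ENNReal.ofReal (a m ^ p) := by
        rw [ENNReal.ofReal_mul (Real.rpow_nonneg hpq.symm.nonneg p),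
          ENNReal.ofReal_rpow_of_nonneg hpq.symm.nonneg hpq.nonneg,
          ENNReal.ofReal_sum_of_nonneg fun m _ => Real.rpow_nonneg (ha m) p]
    _ ≤ ENNReal.ofReal q ^ p * ∑' n, ENNReal.ofReal (a n ^ p) := by
        gcongr
        exact ENNReal.sum_le_tsum _

end Hardy

def IsHomogeneousOfDegree (k : ℝ → ℝ → ℝ) (d : ℝ) : Prop :=
  ∀ u x y : ℝ, 0 < u → 0 < x → 0 < y → k (u * x) (u * y) = u ^ d * k x y

theorem IsHomogeneousOfDegree.swap {k : ℝ → ℝ → ℝ} {d : ℝ}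
    (hk : IsHomogeneousOfDegree k d) :
    IsHomogeneousOfDegree (Function.swap k) d :=
  fun u x y hu hx hy => hk u y x hu hy hx

section HomogeneousKernel

variable {k : ℝ → ℝ → ℝ} {lam r s : ℝ}

theorem IsHomogeneousOfDegree.mul_rpow_eq (hk : IsHomogeneousOfDegree k (-lam))
    (hrs : r + s = lam) {u c : ℝ} (hu : 0 < u) (hc : 0 < c) :
    k u c * u ^ (r - 1) = c ^ (-s - 1) * (k (c⁻¹ * u) 1 * (c⁻¹ * u) ^ (r - 1)) := by
  have hk' := hk c (c⁻¹ * u) 1 hc (by positivity) one_pos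
  rw [mul_inv_cancel_left₀ hc.ne', mul_one] at hk'
  rw [hk', Real.mul_rpow (inv_pos.2 hc).le hu.le, Real.inv_rpow hc.le,
    show -s - 1 = -lam + (r - 1) by linarith, Real.rpow_add hc]
  field_simp

theorem tsum_kernel_row_le (hk : IsHomogeneousOfDegree k (-lam)) (hrs : r + s = lam)
    (hk0 : ∀ u, 0 < u → 0 ≤ k u 1)
    (hint : IntegrableOn (fun u => k u 1 * u ^ (r - 1)) (Ioi 0))
    (hdec : AntitoneOn (fun u => k u 1 * u ^ (r - 1)) (Ioi 0)) {c : ℝ} (hc : 0 < c) :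
    ∑' m : ℕ, ENNReal.ofReal (k (m + 1) c * (m + 1) ^ (r - 1))
      ≤ ENNReal.ofReal ((∫ u in Ioi 0, k u 1 * u ^ (r - 1)) * c ^ (-s)) := by
  have hf0 : ∀ u ∈ Ioi (0 : ℝ), 0 ≤ k u 1 * u ^ (r - 1) :=
    fun u hu => mul_nonneg (hk0 u hu) (Real.rpow_nonneg (le_of_lt hu) _)
  calc ∑' m : ℕ, ENNReal.ofReal (k (m + 1) c * (m + 1) ^ (r - 1))
      = ENNReal.ofReal (c ^ (-s - 1)) * ∑' m : ℕ,
          ENNReal.ofReal (k (c⁻¹ * (m + 1)) 1 * (c⁻¹ * (m + 1)) ^ (r - 1)) := by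
        rw [← ENNReal.tsum_mul_left]
        congr with m
        rw [hk.mul_rpow_eq hrs (by positivity) hc, ENNReal.ofReal_mul (by positivity)]
    _ ≤ ENNReal.ofReal (c ^ (-s - 1)) *
          ENNReal.ofReal (c⁻¹⁻¹ * ∫ u in Ioi 0, k u 1 * u ^ (r - 1)) := by
        gcongr
        exact hdec.tsum_ofReal_comp_mul_le hf0 hint (inv_pos.2 hc)
    _ = ENNReal.ofReal ((∫ u in Ioi 0, k u 1 * u ^ (r - 1)) * c ^ (-s)) := by
        rw [← ENNReal.ofReal_mul (by positivity), inv_inv, Real.rpow_sub_one hc.ne']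
        congr 1
        field_simp

-- The substitution `u = x⁻¹`, in the form taken by `integral_comp_rpow_Ioi` with exponent `-1`.
theorem IsHomogeneousOfDegree.swap_mul_rpow_eq (hk : IsHomogeneousOfDegree k (-lam))
    (hrs : r + s = lam) {x : ℝ} (hx : 0 < x) :
    (|(-1 : ℝ)| * x ^ ((-1 : ℝ) - 1)) • (k (x ^ (-1 : ℝ)) 1 * (x ^ (-1 : ℝ)) ^ (r - 1))
      = k 1 x * x ^ (s - 1) := by
  have hk' := hk x⁻¹ 1 x (inv_pos.2 hx) one_pos hx
  rw [mul_one, inv_mul_cancel₀ hx.ne', Real.inv_rpow hx.le, Real.rpow_neg hx.le, inv_inv] at hk'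
  rw [Real.rpow_neg_one, hk', Real.inv_rpow hx.le, ← Real.rpow_neg hx.le, smul_eq_mul, abs_neg,
    abs_one, one_mul, show s - 1 = (-1 - 1) + lam + -(r - 1) by linarith, Real.rpow_add hx,
    Real.rpow_add hx]
  ring

theorem IsHomogeneousOfDegree.integrableOn_swap (hk : IsHomogeneousOfDegree k (-lam))
    (hrs : r + s = lam) (hint : IntegrableOn (fun u => k u 1 * u ^ (r - 1)) (Ioi 0)) :
    IntegrableOn (fun u => k 1 u * u ^ (s - 1)) (Ioi 0) :=
  ((integrableOn_Ioi_comp_rpow_iff _ (by norm_num : (-1 : ℝ) ≠ 0)).2 hint).congr_fun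
    (fun x (hx : 0 < x) => hk.swap_mul_rpow_eq hrs hx) measurableSet_Ioi

theorem IsHomogeneousOfDegree.integral_swap (hk : IsHomogeneousOfDegree k (-lam))
    (hrs : r + s = lam) :
    ∫ u in Ioi 0, k 1 u * u ^ (s - 1) = ∫ u in Ioi 0, k u 1 * u ^ (r - 1) :=
  (setIntegral_congr_fun measurableSet_Ioi fun x (hx : 0 < x) =>
    hk.swap_mul_rpow_eq hrs hx).symm.trans
    (integral_comp_rpow_Ioi (fun u => k u 1 * u ^ (r - 1)) (by norm_num))

theorem tsum_tsum_kernel_mul_le (hk : IsHomogeneousOfDegree k (-lam)) (hrs : r + s = lam)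
    (hk0 : ∀ u, 0 < u → 0 ≤ k u 1)
    (hint : IntegrableOn (fun u => k u 1 * u ^ (r - 1)) (Ioi 0))
    (hdec : AntitoneOn (fun u => k u 1 * u ^ (r - 1)) (Ioi 0)) (g : ℕ → ℝ≥0∞) :
    ∑' n : ℕ, ∑' m : ℕ,
        ENNReal.ofReal (k (m + 1) (n + 1) * (m + 1) ^ (r - 1) * (n + 1) ^ s) * g n
      ≤ ENNReal.ofReal (∫ u in Ioi 0, k u 1 * u ^ (r - 1)) * ∑' n, g n := by
  rw [← ENNReal.tsum_mul_left]
  refine ENNReal.tsum_le_tsum fun n => ?_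
  have hc : (0 : ℝ) < n + 1 := by positivity
  calc ∑' m : ℕ, ENNReal.ofReal (k (m + 1) (n + 1) * (m + 1) ^ (r - 1) * (n + 1) ^ s) * g n
      = (∑' m : ℕ, ENNReal.ofReal (k (m + 1) (n + 1) * (m + 1) ^ (r - 1)))
          * ENNReal.ofReal ((n + 1) ^ s) * g n := by
        rw [ENNReal.tsum_mul_right]
        congr 1
        rw [← ENNReal.tsum_mul_right]
        congr with m
        rw [ENNReal.ofReal_mul' (by positivity)]
    _ ≤ ENNReal.ofReal ((∫ u in Ioi 0, k u 1 * u ^ (r - 1)) * (n + 1) ^ (-s))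
          * ENNReal.ofReal ((n + 1) ^ s) * g n := by
        gcongr
        exact tsum_kernel_row_le hk hrs hk0 hint hdec hc
    _ = ENNReal.ofReal (∫ u in Ioi 0, k u 1 * u ^ (r - 1)) * g n := by
        rw [ENNReal.ofReal_mul' (by positivity), mul_assoc (ENNReal.ofReal _),
          ← ENNReal.ofReal_mul (by positivity), ← Real.rpow_add hc, neg_add_cancel,
          Real.rpow_zero, ENNReal.ofReal_one, mul_one]

theorem tsum_tsum_kernel_rpow_le {p q : ℝ} (hpq : p.HolderConjugate q)
    (hk : IsHomogeneousOfDegree k (-lam)) (hrs : r + s = lam) (hk0 : ∀ u, 0 < u → 0 ≤ k u 1)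
    (hint : IntegrableOn (fun u => k u 1 * u ^ (r - 1)) (Ioi 0))
    (hdec : AntitoneOn (fun u => k u 1 * u ^ (r - 1)) (Ioi 0)) {b : ℕ → ℝ}
    (hb : ∀ n, 0 ≤ b n) :
    ∑' n : ℕ, ∑' m : ℕ,
        (ENNReal.ofReal (k (m + 1) (n + 1) * (m + 1) ^ (r - 1) * (n + 1) ^ s) ^ (1 / q)
          * ENNReal.ofReal (Hardy.partialMean b n)) ^ q
      ≤ ENNReal.ofReal (∫ u in Ioi 0, k u 1 * u ^ (r - 1))
        * (ENNReal.ofReal p ^ q * ∑' n, ENNReal.ofReal (b n ^ q)) := by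
  simp only [ENNReal.rpow_one_div_mul_rpow hpq.symm.pos,
    ENNReal.ofReal_rpow_of_nonneg (Hardy.partialMean_nonneg hb _) hpq.symm.nonneg]
  exact (tsum_tsum_kernel_mul_le hk hrs hk0 hint hdec _).trans
    (by gcongr; exact Hardy.tsum_ofReal_partialMean_rpow_le hpq.symm hb)

theorem tsum_tsum_kernel_swap_rpow_le {p q : ℝ} (hpq : p.HolderConjugate q)
    (hk : IsHomogeneousOfDegree k (-lam)) (hrs : r + s = lam) (hk0 : ∀ u, 0 < u → 0 ≤ k 1 u)
    (hint : IntegrableOn (fun u => k u 1 * u ^ (r - 1)) (Ioi 0))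
    (hdec : AntitoneOn (fun u => k 1 u * u ^ (s - 1)) (Ioi 0)) {a : ℕ → ℝ}
    (ha : ∀ n, 0 ≤ a n) :
    ∑' n : ℕ, ∑' m : ℕ,
        (ENNReal.ofReal (k (m + 1) (n + 1) * (n + 1) ^ (s - 1) * (m + 1) ^ r) ^ (1 / p)
          * ENNReal.ofReal (Hardy.partialMean a m)) ^ p
      ≤ ENNReal.ofReal (∫ u in Ioi 0, k u 1 * u ^ (r - 1))
        * (ENNReal.ofReal q ^ p * ∑' n, ENNReal.ofReal (a n ^ p)) := by
  rw [ENNReal.tsum_comm, ← hk.integral_swap hrs]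
  exact tsum_tsum_kernel_rpow_le (k := Function.swap k) hpq.symm hk.swap (by rw [add_comm, hrs])
    hk0 (hk.integrableOn_swap hrs hint) hdec ha

end HomogeneousKernel

theorem ofReal_hilbert_term_eq {p q r s K u v A B : ℝ} (hpq : p.HolderConjugate q) (hK : 0 ≤ K)
    (hu : 0 < u) (hv : 0 < v) (hA : 0 ≤ A) :
    ENNReal.ofReal (u ^ (r - 1 / q - 1) * v ^ (s - 1 / p - 1) * K * A * B)
      = ENNReal.ofReal (K * v ^ (s - 1) * u ^ r) ^ (1 / p) * ENNReal.ofReal (A / u)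
        * (ENNReal.ofReal (K * u ^ (r - 1) * v ^ s) ^ (1 / q) * ENNReal.ofReal (B / v)) := by
  have hp := hpq.pos
  have hq := hpq.symm.pos
  have hpq' : 1 / p + 1 / q = 1 := by rw [hpq.one_div_add_one_div, one_div_one]
  have hK' : K = K ^ (1 / p) * K ^ (1 / q) := by
    rw [← Real.rpow_add' hK (by rw [hpq']; exact one_ne_zero), hpq', Real.rpow_one]
  have hu' : u ^ (r - 1 / q - 1) = u ^ (r * (1 / p)) * u ^ ((r - 1) * (1 / q)) / u := by
    rw [← Real.rpow_add hu, ← Real.rpow_sub_one hu.ne']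
    congr 1
    linear_combination -r * hpq'
  have hv' : v ^ (s - 1 / p - 1) = v ^ ((s - 1) * (1 / p)) * v ^ (s * (1 / q)) / v := by
    rw [← Real.rpow_add hv, ← Real.rpow_sub_one hv.ne']
    congr 1
    linear_combination -s * hpq'
  have factor : u ^ (r - 1 / q - 1) * v ^ (s - 1 / p - 1) * K * A * B
      = (K * v ^ (s - 1) * u ^ r) ^ (1 / p) * (A / u)
        * ((K * u ^ (r - 1) * v ^ s) ^ (1 / q) * (B / v)) := by
    rw [Real.mul_rpow (by positivity) (by positivity), Real.mul_rpow hK (by positivity),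
      Real.mul_rpow (by positivity) (by positivity), Real.mul_rpow hK (by positivity),
      ← Real.rpow_mul hu.le, ← Real.rpow_mul hu.le, ← Real.rpow_mul hv.le,
      ← Real.rpow_mul hv.le, hu', hv']
    nth_rewrite 1 [hK']
    field_simp
  rw [factor, ENNReal.ofReal_mul (by positivity), ENNReal.ofReal_mul (by positivity),
    ENNReal.ofReal_mul (by positivity),
    ENNReal.ofReal_rpow_of_nonneg (by positivity) (by positivity),
    ENNReal.ofReal_rpow_of_nonneg (by positivity) (by positivity)]

theorem discrete_hardy_hilbert_general_kernel_general
    (p q lam r s : ℝ) (hp : 1 < p) (hpq : 1 / p + 1 / q = 1)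
    (hrs : r + s = lam)
    (k : ℝ → ℝ → ℝ)
    (hk_pos : ∀ x y : ℝ, 0 < x → 0 < y → 0 < k x y)
    (hk_hom : ∀ u x y : ℝ, 0 < u → 0 < x → 0 < y →
      k (u * x) (u * y) = u ^ (-lam) * k x y)
    (kr : ℝ) (hkr_pos : 0 < kr)
    (hkr_int : IntegrableOn (fun u => k u 1 * u ^ (r - 1)) (Ioi (0:ℝ)))
    (hkr : kr = ∫ u in Ioi (0:ℝ), k u 1 * u ^ (r - 1))
    (hk_dec₁ : AntitoneOn (fun u => k u 1 * u ^ (r - 1)) (Ioi (0:ℝ)))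
    (hk_dec₂ : AntitoneOn (fun u => k 1 u * u ^ (s - 1)) (Ioi (0:ℝ)))
    (a b : ℕ → ℝ) (ha : ∀ n, 0 ≤ a n) (hb : ∀ n, 0 ≤ b n)
    (ha_sum : Summable (fun n => a n ^ p)) (hb_sum : Summable (fun n => b n ^ q))
    (A B : ℕ → ℝ)
    (hA : ∀ n, A n = ∑ i ∈ Finset.range (n + 1), a i)
    (hB : ∀ n, B n = ∑ i ∈ Finset.range (n + 1), b i) :
    ∑' n : ℕ, ∑' m : ℕ,
        ENNReal.ofReal (((m : ℝ) + 1) ^ (r - 1 / q - 1) * ((n : ℝ) + 1) ^ (s - 1 / p - 1) *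
          k ((m : ℝ) + 1) ((n : ℝ) + 1) * A m * B n)
      ≤ ENNReal.ofReal (p * q * kr *
          (∑' n, a n ^ p) ^ (1 / p) * (∑' n, b n ^ q) ^ (1 / q)) := by
  have hconj : p.HolderConjugate q :=
    Real.holderConjugate_iff.2 ⟨hp, by rw [← one_div, ← one_div]; exact hpq⟩
  have hSa : 0 ≤ ∑' n, a n ^ p := tsum_nonneg fun n => Real.rpow_nonneg (ha n) p
  have hSb : 0 ≤ ∑' n, b n ^ q := tsum_nonneg fun n => Real.rpow_nonneg (hb n) q
  calc _ = ∑' n : ℕ, ∑' m : ℕ,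
        ENNReal.ofReal (k (m + 1) (n + 1) * (n + 1) ^ (s - 1) * (m + 1) ^ r) ^ (1 / p)
          * ENNReal.ofReal (Hardy.partialMean a m)
        * (ENNReal.ofReal (k (m + 1) (n + 1) * (m + 1) ^ (r - 1) * (n + 1) ^ s) ^ (1 / q)
          * ENNReal.ofReal (Hardy.partialMean b n)) := by
        refine tsum_congr fun n => tsum_congr fun m => ?_
        rw [ofReal_hilbert_term_eq hconj (hk_pos _ _ (by positivity) (by positivity)).le
          (by positivity) (by positivity) (by rw [hA]; exact Finset.sum_nonneg fun i _ => ha i),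
          hA, hB]
        rfl
    _ ≤ _ := ENNReal.tsum_tsum_mul_le _ _ hconj
    _ ≤ (ENNReal.ofReal kr * (ENNReal.ofReal q ^ p * ENNReal.ofReal (∑' n, a n ^ p))) ^ (1 / p)
        * (ENNReal.ofReal kr * (ENNReal.ofReal p ^ q * ENNReal.ofReal (∑' n, b n ^ q)))
          ^ (1 / q) := by
        rw [ENNReal.ofReal_tsum_of_nonneg (fun n => Real.rpow_nonneg (ha n) p) ha_sum,
          ENNReal.ofReal_tsum_of_nonneg (fun n => Real.rpow_nonneg (hb n) q) hb_sum, hkr]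
        have := hconj.symm.pos
        gcongr
        · exact tsum_tsum_kernel_swap_rpow_le hconj hk_hom hrs
            (fun u hu => (hk_pos 1 u one_pos hu).le) hkr_int hk_dec₂ ha
        · exact tsum_tsum_kernel_rpow_le hconj hk_hom hrs
            (fun u hu => (hk_pos u 1 hu one_pos).le) hkr_int hk_dec₁ hb
    _ = _ := ENNReal.rpow_one_div_mul_rpow_one_div_eq_ofReal hconj hkr_pos.le hSa hSb

theorem discrete_hardy_hilbert_general_kernel
    (p q lam r s : ℝ) (hp : 1 < p) (hpq : 1 / p + 1 / q = 1)
    (hlam : 0 < lam) (hr : 0 < r) (hs : 0 < s) (hrs : r + s = lam)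
    (k : ℝ → ℝ → ℝ)
    (hk_meas : Measurable (Function.uncurry k))
    (hk_pos : ∀ x y : ℝ, 0 < x → 0 < y → 0 < k x y)
    (hk_hom : ∀ u x y : ℝ, 0 < u → 0 < x → 0 < y →
      k (u * x) (u * y) = u ^ (-lam) * k x y)
    (kr : ℝ) (hkr_pos : 0 < kr)
    (hkr_int : IntegrableOn (fun u => k u 1 * u ^ (r - 1)) (Ioi (0:ℝ)))
    (hkr : kr = ∫ u in Ioi (0:ℝ), k u 1 * u ^ (r - 1))
    (hk_dec₁ : AntitoneOn (fun u => k u 1 * u ^ (r - 1)) (Ioi (0:ℝ)))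
    (hk_dec₂ : AntitoneOn (fun u => k 1 u * u ^ (s - 1)) (Ioi (0:ℝ)))
    (a b : ℕ → ℝ) (ha : ∀ n, 0 ≤ a n) (hb : ∀ n, 0 ≤ b n)
    (ha_sum : Summable (fun n => a n ^ p)) (hb_sum : Summable (fun n => b n ^ q))
    (ha_pos : 0 < ∑' n, a n ^ p) (hb_pos : 0 < ∑' n, b n ^ q)
    (A B : ℕ → ℝ)
    (hA : ∀ n, A n = ∑ i ∈ Finset.range (n + 1), a i)
    (hB : ∀ n, B n = ∑ i ∈ Finset.range (n + 1), b i) :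
    ∑' n : ℕ, ∑' m : ℕ,
        ENNReal.ofReal (((m : ℝ) + 1) ^ (r - 1 / q - 1) * ((n : ℝ) + 1) ^ (s - 1 / p - 1) *
          k ((m : ℝ) + 1) ((n : ℝ) + 1) * A m * B n)
      ≤ ENNReal.ofReal (p * q * kr *
          (∑' n, a n ^ p) ^ (1 / p) * (∑' n, b n ^ q) ^ (1 / q)) :=
  discrete_hardy_hilbert_general_kernel_general p q lam r s hp hpq hrs k hk_pos hk_hom kr hkr_pos
    hkr_int hkr hk_dec₁ hk_dec₂ a b ha hb ha_sum hb_sum A B hA hB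
end

section
/- Let p > 1, 1/p + 1/q = 1, λ > 0, r, s > 0 with r + s = λ. Let k : (0,∞)² → (0,∞) be measurable and homogeneous of degree -λ with k_λ(r) = ∫₀^∞ k(u,1) u^{r-1} du finite and positive, u ↦ k(u,1) u^{r-1} and u ↦ k(1,u) u^{s-1} decreasing on (0,∞). Let (aₙ) be a nonnegative sequence with 0 < ∑ aₙ^p < ∞ and Aₙ = a₁+⋯+aₙ. Then ∑ₙ (∑ₘ m^{r - 1/q - 1} n^{s - 1/p} k(m,n) Aₘ)^p ≤ (q k_λ(r))^p ∑ aₙ^p. -/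
/-!
Write `A m = (m + 1) b m`, so that `b` is the sequence of Hardy means of `a`. The inner sum is then
the operator with kernel `K m n = m^(r - 1/q) n^(s - 1/p) k(m, n)` applied to `b`, and the Schur
test with the test function `(m + 1)^(-1/(pq))` bounds it on `ℓ^p` by `kr^p`. The two weight
estimates the test needs, `∑ₘ k(m, ν) m^(r-1) ≤ kr ν^(-s)` and its mirror image, follow from
homogeneity and the comparison of a decreasing function with its integral; the substitution
`u ↦ 1/u` shows that the mirror-image weight integral is again `kr`. Hardy's inequality
`∑ bₘ^p ≤ q^p ∑ aₘ^p` finishes the proof.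
-/

open MeasureTheory Set
open scoped ENNReal

theorem ENNReal.tsum_mul_le_Lp_mul_Lq {ι : Type*} {p q : ℝ} (hpq : p.HolderConjugate q)
    (f g : ι → ℝ≥0∞) :
    ∑' i, f i * g i ≤ (∑' i, f i ^ p) ^ (1 / p) * (∑' i, g i ^ q) ^ (1 / q) :=
  ENNReal.summable.tsum_le_of_sum_le fun s => (ENNReal.inner_le_Lp_mul_Lq s f g hpq).trans <|
    mul_le_mul' (ENNReal.rpow_le_rpow (ENNReal.sum_le_tsum s) hpq.one_div_nonneg)
      (ENNReal.rpow_le_rpow (ENNReal.sum_le_tsum s) hpq.symm.one_div_nonneg)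

theorem ENNReal.rpow_tsum_mul_le_tsum_mul_rpow_mul {ι : Type*} {p q : ℝ}
    (hpq : p.HolderConjugate q) (K φ : ι → ℝ≥0∞) (hφ₀ : ∀ i, φ i ≠ 0) (hφ : ∀ i, φ i ≠ ∞)
    (x : ι → ℝ≥0∞) :
    (∑' i, K i * x i) ^ p
      ≤ (∑' i, K i * x i ^ p * (φ i ^ p)⁻¹) * (∑' i, K i * φ i ^ q) ^ (p / q) := by
  have hp := hpq.pos
  have hq := hpq.symm.pos
  have hpow : ∀ (y : ℝ≥0∞) {t : ℝ}, 0 < t → (y ^ (1 / t)) ^ t = y := fun y t ht => by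
    rw [← ENNReal.rpow_mul, one_div_mul_cancel ht.ne', ENNReal.rpow_one]
  -- Hölder after splitting `K x = (K^(1/p) x / φ) (K^(1/q) φ)`
  have hsplit : ∀ i, K i * x i = K i ^ (1 / p) * x i * (φ i)⁻¹ * (K i ^ (1 / q) * φ i) := by
    intro i
    rw [show K i * x i = K i ^ (1 / p + 1 / q) * x i * ((φ i)⁻¹ * φ i) by
      rw [hpq.one_div_add_one_div, div_one, ENNReal.rpow_one,
        ENNReal.inv_mul_cancel (hφ₀ i) (hφ i), mul_one],
      ENNReal.rpow_add_of_nonneg _ _ hpq.one_div_nonneg hpq.symm.one_div_nonneg]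
    ring
  calc (∑' i, K i * x i) ^ p
      ≤ ((∑' i, (K i ^ (1 / p) * x i * (φ i)⁻¹) ^ p) ^ (1 / p)
          * (∑' i, (K i ^ (1 / q) * φ i) ^ q) ^ (1 / q)) ^ p := by
        rw [tsum_congr hsplit]
        gcongr
        exact ENNReal.tsum_mul_le_Lp_mul_Lq hpq _ _
    _ = (∑' i, K i * x i ^ p * (φ i ^ p)⁻¹) * (∑' i, K i * φ i ^ q) ^ (p / q) := by
        simp only [ENNReal.mul_rpow_of_nonneg _ _ hp.le, ENNReal.mul_rpow_of_nonneg _ _ hq.le,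
          ENNReal.inv_rpow, hpow _ hp, hpow _ hq, ← ENNReal.rpow_mul]
        congr 2
        field_simp

theorem ENNReal.tsum_rpow_tsum_mul_le_of_schur {ι κ : Type*} {p q : ℝ} (hpq : p.HolderConjugate q)
    (K : ι → κ → ℝ≥0∞) (φ : ι → ℝ≥0∞) (ψ : κ → ℝ≥0∞) (hφ₀ : ∀ i, φ i ≠ 0) (hφ : ∀ i, φ i ≠ ∞)
    {C₁ C₂ : ℝ≥0∞} (h₁ : ∀ j, ∑' i, K i j * φ i ^ q ≤ C₁ * ψ j ^ q)
    (h₂ : ∀ i, ∑' j, K i j * ψ j ^ p ≤ C₂ * φ i ^ p) (x : ι → ℝ≥0∞) :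
    ∑' j, (∑' i, K i j * x i) ^ p ≤ C₁ ^ (p / q) * C₂ * ∑' i, x i ^ p := by
  have hp := hpq.pos
  have hq := hpq.symm.pos
  have hrow : ∀ j, (∑' i, K i j * x i) ^ p
      ≤ C₁ ^ (p / q) * ψ j ^ p * ∑' i, K i j * x i ^ p * (φ i ^ p)⁻¹ := fun j =>
    calc (∑' i, K i j * x i) ^ p
        ≤ (∑' i, K i j * x i ^ p * (φ i ^ p)⁻¹) * (∑' i, K i j * φ i ^ q) ^ (p / q) :=
          ENNReal.rpow_tsum_mul_le_tsum_mul_rpow_mul hpq (K · j) φ hφ₀ hφ x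
      _ ≤ (∑' i, K i j * x i ^ p * (φ i ^ p)⁻¹) * (C₁ * ψ j ^ q) ^ (p / q) := by
          gcongr
          exact h₁ j
      _ = C₁ ^ (p / q) * ψ j ^ p * ∑' i, K i j * x i ^ p * (φ i ^ p)⁻¹ := by
          rw [ENNReal.mul_rpow_of_nonneg _ _ (div_pos hp hq).le, ← ENNReal.rpow_mul,
            mul_div_cancel₀ _ hq.ne']
          ring
  calc ∑' j, (∑' i, K i j * x i) ^ p
      ≤ ∑' j, C₁ ^ (p / q) * ψ j ^ p * ∑' i, K i j * x i ^ p * (φ i ^ p)⁻¹ :=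
        ENNReal.tsum_le_tsum hrow
    _ = C₁ ^ (p / q) * ∑' i, x i ^ p * (φ i ^ p)⁻¹ * ∑' j, K i j * ψ j ^ p := by
        simp only [← ENNReal.tsum_mul_left]
        rw [ENNReal.tsum_comm]
        exact tsum_congr fun i => tsum_congr fun j => by ring
    _ ≤ C₁ ^ (p / q) * ∑' i, x i ^ p * (φ i ^ p)⁻¹ * (C₂ * φ i ^ p) := by
        gcongr with i
        exact h₂ i
    _ = C₁ ^ (p / q) * ∑' i, C₂ * x i ^ p := by
        congr 1
        refine tsum_congr fun i => ?_
        rw [mul_comm C₂, ← mul_assoc, mul_assoc _ _ (φ i ^ p),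
          ENNReal.inv_mul_cancel (by simp [hφ₀ i, hφ i]) (by simp [hφ₀ i, hφ i]), mul_one,
          mul_comm]
    _ = C₁ ^ (p / q) * C₂ * ∑' i, x i ^ p := by
        rw [ENNReal.tsum_mul_left, mul_assoc]

namespace Real.HolderConjugate

variable {p q : ℝ} (hpq : p.HolderConjugate q)
include hpq

/-- The telescoping step of Elliott's proof of Hardy's inequality, a consequence of Young's
inequality `x ^ (p - 1) * y ≤ x ^ p / q + y ^ p / p`. -/
theorem hardy_step {x y c : ℝ} (hx : 0 ≤ x) (hy : 0 ≤ y) (hc : 0 ≤ c) :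
    x ^ p - q * (x ^ (p - 1) * ((c + 1) * x - c * y))
      ≤ (q - 1) * (c * y ^ p - (c + 1) * x ^ p) := by
  have hxp : x ^ (p - 1) * x = x ^ p := by
    rw [← rpow_add_one' hx (by linarith [hpq.pos]), sub_add_cancel]
  have hyoung : q * (x ^ (p - 1) * y) ≤ x ^ p + (q - 1) * y ^ p := by
    have h := young_inequality_of_nonneg (rpow_nonneg hx (p - 1)) hy hpq.symm
    rw [← rpow_mul hx, hpq.sub_one_mul_conj] at h
    have hq := hpq.symm.pos
    calc q * (x ^ (p - 1) * y) ≤ q * (x ^ p / q + y ^ p / p) := by gcongr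
      _ = x ^ p + (q - 1) * y ^ p := by
        rw [mul_add, mul_div_cancel₀ _ hq.ne', ← hpq.symm.div_conj_eq_sub_one]
        ring
  linear_combination c * hyoung - q * (c + 1) * hxp

theorem le_rpow_mul_of_le_mul_rpow_mul_rpow {S W C : ℝ} (hS : 0 ≤ S) (hW : 0 ≤ W) (hC : 0 ≤ C)
    (h : S ≤ C * (S ^ (1 / q) * W ^ (1 / p))) : S ≤ C ^ p * W := by
  rcases hS.eq_or_lt with rfl | hS
  · positivity
  have hcancel : S ^ (1 / p) ≤ C * W ^ (1 / p) := by
    refine le_of_mul_le_mul_right ?_ (rpow_pos_of_pos hS (1 / q))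
    rw [← rpow_add hS, hpq.one_div_add_one_div, div_one, rpow_one]
    linarith
  calc S = (S ^ (1 / p)) ^ p := by rw [← rpow_mul hS.le, one_div_mul_cancel hpq.ne_zero, rpow_one]
    _ ≤ (C * W ^ (1 / p)) ^ p := rpow_le_rpow (rpow_nonneg hS.le _) hcancel hpq.nonneg
    _ = C ^ p * W := by
      rw [mul_rpow hC (rpow_nonneg hW _), ← rpow_mul hW, one_div_mul_cancel hpq.ne_zero, rpow_one]

theorem hardy_sum_range_le {a : ℕ → ℝ} (ha : ∀ n, 0 ≤ a n) (N : ℕ) :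
    ∑ n ∈ Finset.range N, ((∑ i ∈ Finset.range (n + 1), a i) / (n + 1)) ^ p
      ≤ q ^ p * ∑ n ∈ Finset.range N, a n ^ p := by
  set α : ℕ → ℝ := fun n => (∑ i ∈ Finset.range (n + 1), a i) / (n + 1) with hα_def
  have hα : ∀ n, 0 ≤ α n := fun n =>
    div_nonneg (Finset.sum_nonneg fun i _ => ha i) n.cast_add_one_pos.le
  have hmul : ∀ n : ℕ, (n + 1) * α n = ∑ i ∈ Finset.range (n + 1), a i := fun n =>
    mul_div_cancel₀ _ n.cast_add_one_pos.ne'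
  have ha_eq : ∀ n : ℕ, a n = (n + 1) * α n - n * α (n - 1) := by
    rintro (_ | n)
    · simp [hα_def]
    · rw [hmul, Nat.add_sub_cancel, Finset.sum_range_succ, ← hmul n]
      push_cast
      ring
  set T : ℕ → ℝ := fun n => n * α (n - 1) ^ p with hT
  have hstep : ∀ n, α n ^ p - q * (α n ^ (p - 1) * a n) ≤ (q - 1) * (T n - T (n + 1)) := by
    intro n
    have h := hpq.hardy_step (hα n) (hα (n - 1)) n.cast_nonneg
    rw [← ha_eq] at h
    simpa [hT] using h
  have htelescope : ∑ n ∈ Finset.range N, α n ^ p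
      ≤ q * ∑ n ∈ Finset.range N, α n ^ (p - 1) * a n := by
    have h := Finset.sum_le_sum fun n (_ : n ∈ Finset.range N) => hstep n
    rw [← Finset.mul_sum, Finset.sum_range_sub', Finset.sum_sub_distrib, ← Finset.mul_sum] at h
    have hTN : 0 ≤ T N := mul_nonneg N.cast_nonneg (rpow_nonneg (hα _) p)
    have hq1 : 0 ≤ q - 1 := by linarith [hpq.symm.lt]
    simp only [hT, CharP.cast_eq_zero, zero_mul] at h hTN
    nlinarith
  have hholder : ∑ n ∈ Finset.range N, α n ^ (p - 1) * a n
      ≤ (∑ n ∈ Finset.range N, α n ^ p) ^ (1 / q) * (∑ n ∈ Finset.range N, a n ^ p) ^ (1 / p) := by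
    have h := inner_le_Lp_mul_Lq_of_nonneg (Finset.range N) hpq.symm
      (fun n _ => rpow_nonneg (hα n) (p - 1)) (fun n _ => ha n)
    simpa only [← rpow_mul (hα _), hpq.sub_one_mul_conj] using h
  exact hpq.le_rpow_mul_of_le_mul_rpow_mul_rpow (Finset.sum_nonneg fun n _ => rpow_nonneg (hα n) p)
    (Finset.sum_nonneg fun n _ => rpow_nonneg (ha n) p) hpq.symm.pos.le
    (htelescope.trans (by gcongr; exact hpq.symm.pos.le))

theorem hardy_tsum_le {a : ℕ → ℝ} (ha : ∀ n, 0 ≤ a n) (hsum : Summable fun n => a n ^ p) :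
    ∑' n : ℕ, ENNReal.ofReal ((∑ i ∈ Finset.range (n + 1), a i) / (n + 1)) ^ p
      ≤ ENNReal.ofReal (q ^ p * ∑' n, a n ^ p) := by
  refine ENNReal.tsum_le_of_sum_range_le fun N => ?_
  have hA : ∀ n : ℕ, 0 ≤ (∑ i ∈ Finset.range (n + 1), a i) / (n + 1) := fun n =>
    div_nonneg (Finset.sum_nonneg fun i _ => ha i) n.cast_add_one_pos.le
  simp only [ENNReal.ofReal_rpow_of_nonneg (hA _) hpq.nonneg]
  rw [← ENNReal.ofReal_sum_of_nonneg fun n _ => rpow_nonneg (hA n) p]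
  refine ENNReal.ofReal_le_ofReal ((hpq.hardy_sum_range_le ha N).trans ?_)
  gcongr
  · exact rpow_nonneg hpq.symm.pos.le p
  · exact hsum.sum_le_tsum _ fun n _ => rpow_nonneg (ha n) p

end Real.HolderConjugate

theorem AntitoneOn.tsum_ofReal_le_mul_integral {f : ℝ → ℝ} (hf : AntitoneOn f (Ioi 0))
    (hf₀ : ∀ x ∈ Ioi 0, 0 ≤ f x) (hfi : IntegrableOn f (Ioi 0)) {ν : ℝ} (hν : 0 < ν) :
    ∑' m : ℕ, ENNReal.ofReal (f ((m + 1) / ν)) ≤ ENNReal.ofReal (ν * ∫ x in Ioi 0, f x) := by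
  set I : ℕ → Set ℝ := fun m => Ioc ((m : ℝ) / ν) (((m + 1 : ℕ) : ℝ) / ν) with hI
  have hI_pos : ∀ m, I m ⊆ Ioi 0 := fun m x hx =>
    (div_nonneg m.cast_nonneg hν.le).trans_lt hx.1
  have hterm : ∀ m : ℕ, ENNReal.ofReal (f ((m + 1) / ν))
      ≤ ENNReal.ofReal ν * ∫⁻ x in I m, ENNReal.ofReal (f x) := by
    intro m
    calc ENNReal.ofReal (f ((m + 1) / ν))
        = ENNReal.ofReal ν * ∫⁻ _ in I m, ENNReal.ofReal (f ((m + 1) / ν)) := by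
          rw [setLIntegral_const, Real.volume_Ioc, ← mul_assoc, mul_comm (ENNReal.ofReal ν),
            mul_assoc, ← ENNReal.ofReal_mul hν.le]
          push_cast
          rw [← sub_div, add_sub_cancel_left, mul_one_div_cancel hν.ne', ENNReal.ofReal_one,
            mul_one]
      _ ≤ ENNReal.ofReal ν * ∫⁻ x in I m, ENNReal.ofReal (f x) := by
          refine mul_le_mul_right (setLIntegral_mono' measurableSet_Ioc fun x hx => ?_) _
          exact ENNReal.ofReal_le_ofReal <| hf (hI_pos m hx)
            (by positivity : (0 : ℝ) < (m + 1) / ν) (by exact_mod_cast hx.2)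
  have hdisj : Pairwise (Function.onFun Disjoint I) := by
    have hmono : Monotone fun m : ℕ => (m : ℝ) / ν := fun m n h =>
      div_le_div_of_nonneg_right (by exact_mod_cast h) hν.le
    simpa [hI, Nat.succ_eq_add_one] using hmono.pairwise_disjoint_on_Ioc_succ
  calc ∑' m : ℕ, ENNReal.ofReal (f ((m + 1) / ν))
      ≤ ∑' m : ℕ, ENNReal.ofReal ν * ∫⁻ x in I m, ENNReal.ofReal (f x) := ENNReal.tsum_le_tsum hterm
    _ = ENNReal.ofReal ν * ∫⁻ x in ⋃ m, I m, ENNReal.ofReal (f x) := by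
      rw [ENNReal.tsum_mul_left, lintegral_iUnion (fun m => measurableSet_Ioc) hdisj]
    _ ≤ ENNReal.ofReal ν * ∫⁻ x in Ioi 0, ENNReal.ofReal (f x) :=
      mul_le_mul_right (lintegral_mono_set (iUnion_subset hI_pos)) _
    _ = ENNReal.ofReal (ν * ∫ x in Ioi 0, f x) := by
      rw [ENNReal.ofReal_mul hν.le,
        ofReal_integral_eq_lintegral_ofReal hfi (ae_restrict_of_forall_mem measurableSet_Ioi hf₀)]

noncomputable def hilbertKernel (k : ℝ → ℝ → ℝ) (p q r s : ℝ) (m n : ℕ) : ℝ≥0∞ :=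
  ENNReal.ofReal (((m : ℝ) + 1) ^ (r - 1 / q) * ((n : ℝ) + 1) ^ (s - 1 / p) * k (m + 1) (n + 1))

theorem integral_kernel_mul_rpow_nonneg {k : ℝ → ℝ → ℝ} {r : ℝ}
    (hk_nonneg : ∀ x y, 0 < x → 0 < y → 0 ≤ k x y) :
    0 ≤ ∫ u in Ioi 0, k u 1 * u ^ (r - 1) :=
  setIntegral_nonneg measurableSet_Ioi fun u hu =>
    mul_nonneg (hk_nonneg u 1 hu one_pos) (Real.rpow_nonneg (le_of_lt hu) _)

section Kernel

variable {k : ℝ → ℝ → ℝ} {p q lam r s : ℝ}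
  (hk_hom : ∀ u x y : ℝ, 0 < u → 0 < x → 0 < y → k (u * x) (u * y) = u ^ (-lam) * k x y)
include hk_hom

theorem kernel_mul_rpow_eq_of_homogeneous {x ν : ℝ} (hx : 0 < x) (hν : 0 < ν) :
    k x ν * x ^ (r - 1) = ν ^ (r - 1 - lam) * (k (x / ν) 1 * (x / ν) ^ (r - 1)) := by
  have h := hk_hom ν (x / ν) 1 hν (div_pos hx hν) one_pos
  rw [mul_div_cancel₀ _ hν.ne', mul_one] at h
  rw [h, Real.div_rpow hx.le hν.le, sub_eq_add_neg (r - 1), Real.rpow_add hν]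
  field_simp

/-- The substitution `u ↦ u⁻¹`, in the form used by `integral_comp_rpow_Ioi`, exchanges the two
variables of the kernel. -/
theorem kernel_comp_inv_mul_rpow_eq (hrs : r + s = lam) {x : ℝ} (hx : 0 < x) :
    (|(-1 : ℝ)| * x ^ ((-1 : ℝ) - 1)) • (k 1 (x ^ (-1 : ℝ)) * (x ^ (-1 : ℝ)) ^ (s - 1))
      = k x 1 * x ^ (r - 1) := by
  have h := hk_hom x⁻¹ x 1 (inv_pos.2 hx) hx one_pos
  rw [inv_mul_cancel₀ hx.ne', mul_one, Real.inv_rpow hx.le, Real.rpow_neg hx.le, inv_inv] at h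
  rw [Real.rpow_neg_one, h, Real.inv_rpow hx.le, ← Real.rpow_neg hx.le, smul_eq_mul, abs_neg,
    abs_one, one_mul]
  calc x ^ ((-1 : ℝ) - 1) * (x ^ lam * k x 1 * x ^ (-(s - 1)))
      = k x 1 * (x ^ ((-1 : ℝ) - 1) * x ^ lam * x ^ (-(s - 1))) := by ring
    _ = k x 1 * x ^ (r - 1) := by
      rw [← Real.rpow_add hx, ← Real.rpow_add hx, ← hrs]
      ring_nf

theorem integrableOn_kernel_swap (hrs : r + s = lam)
    (hint : IntegrableOn (fun u => k u 1 * u ^ (r - 1)) (Ioi 0)) :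
    IntegrableOn (fun u => k 1 u * u ^ (s - 1)) (Ioi 0) := by
  rw [← integrableOn_Ioi_comp_rpow_iff _ (by norm_num : (-1 : ℝ) ≠ 0)]
  exact hint.congr_fun (fun x hx => (kernel_comp_inv_mul_rpow_eq hk_hom hrs hx).symm)
    measurableSet_Ioi

theorem integral_kernel_swap (hrs : r + s = lam) :
    ∫ u in Ioi 0, k 1 u * u ^ (s - 1) = ∫ u in Ioi 0, k u 1 * u ^ (r - 1) := by
  rw [← integral_comp_rpow_Ioi _ (by norm_num : (-1 : ℝ) ≠ 0)]
  exact setIntegral_congr_fun measurableSet_Ioi fun x hx =>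
    kernel_comp_inv_mul_rpow_eq hk_hom hrs hx

theorem tsum_ofReal_kernel_mul_rpow_le (hk_nonneg : ∀ x y, 0 < x → 0 < y → 0 ≤ k x y)
    (hint : IntegrableOn (fun u => k u 1 * u ^ (r - 1)) (Ioi 0))
    (hdec : AntitoneOn (fun u => k u 1 * u ^ (r - 1)) (Ioi 0)) {ν : ℝ} (hν : 0 < ν) :
    ∑' m : ℕ, ENNReal.ofReal (k (m + 1) ν * ((m : ℝ) + 1) ^ (r - 1))
      ≤ ENNReal.ofReal ((∫ u in Ioi 0, k u 1 * u ^ (r - 1)) * ν ^ (r - lam)) := by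
  have hν' : 0 ≤ ν ^ (r - 1 - lam) := Real.rpow_nonneg hν.le _
  calc ∑' m : ℕ, ENNReal.ofReal (k (m + 1) ν * ((m : ℝ) + 1) ^ (r - 1))
      = ENNReal.ofReal (ν ^ (r - 1 - lam)) *
          ∑' m : ℕ, ENNReal.ofReal (k ((m + 1) / ν) 1 * ((m + 1) / ν) ^ (r - 1)) := by
        rw [← ENNReal.tsum_mul_left]
        refine tsum_congr fun m => ?_
        rw [kernel_mul_rpow_eq_of_homogeneous hk_hom m.cast_add_one_pos hν,
          ENNReal.ofReal_mul hν']
    _ ≤ ENNReal.ofReal (ν ^ (r - 1 - lam)) *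
          ENNReal.ofReal (ν * ∫ u in Ioi 0, k u 1 * u ^ (r - 1)) := by
        gcongr
        exact hdec.tsum_ofReal_le_mul_integral
          (fun u hu => mul_nonneg (hk_nonneg u 1 hu one_pos) (Real.rpow_nonneg (le_of_lt hu) _))
          hint hν
    _ = ENNReal.ofReal ((∫ u in Ioi 0, k u 1 * u ^ (r - 1)) * ν ^ (r - lam)) := by
        rw [← ENNReal.ofReal_mul hν', show r - lam = r - 1 - lam + 1 by ring,
          Real.rpow_add_one hν.ne']
        ring_nf

theorem tsum_hilbertKernel_mul_rpow_le_left (hpq : 1 / p + 1 / q = 1) (hrs : r + s = lam)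
    (hk_nonneg : ∀ x y, 0 < x → 0 < y → 0 ≤ k x y)
    (hint : IntegrableOn (fun u => k u 1 * u ^ (r - 1)) (Ioi 0))
    (hdec : AntitoneOn (fun u => k u 1 * u ^ (r - 1)) (Ioi 0)) (n : ℕ) :
    ∑' m : ℕ, hilbertKernel k p q r s m n * ENNReal.ofReal (((m : ℝ) + 1) ^ (-(1 / p)))
      ≤ ENNReal.ofReal (∫ u in Ioi 0, k u 1 * u ^ (r - 1))
        * ENNReal.ofReal (((n : ℝ) + 1) ^ (-(1 / p))) := by
  have hν := n.cast_add_one_pos (α := ℝ)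
  calc _ = ENNReal.ofReal (((n : ℝ) + 1) ^ (s - 1 / p)) * ∑' m : ℕ,
        ENNReal.ofReal (k (m + 1) ((n : ℝ) + 1) * ((m : ℝ) + 1) ^ (r - 1)) := by
        rw [← ENNReal.tsum_mul_left]
        refine tsum_congr fun m => ?_
        have hμ := m.cast_add_one_pos (α := ℝ)
        rw [hilbertKernel, ← ENNReal.ofReal_mul (mul_nonneg (by positivity) (hk_nonneg _ _ hμ hν)),
          ← ENNReal.ofReal_mul (by positivity)]
        congr 1
        rw [show r - 1 = r - 1 / q + -(1 / p) by linarith, Real.rpow_add hμ]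
        ring
    _ ≤ ENNReal.ofReal (((n : ℝ) + 1) ^ (s - 1 / p)) *
        ENNReal.ofReal ((∫ u in Ioi 0, k u 1 * u ^ (r - 1)) * ((n : ℝ) + 1) ^ (r - lam)) := by
        gcongr
        exact tsum_ofReal_kernel_mul_rpow_le hk_hom hk_nonneg hint hdec hν
    _ = _ := by
        rw [← ENNReal.ofReal_mul (by positivity),
          ← ENNReal.ofReal_mul (integral_kernel_mul_rpow_nonneg hk_nonneg)]
        congr 1
        rw [show -(1 / p) = s - 1 / p + (r - lam) by linarith, Real.rpow_add hν]
        ring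

theorem tsum_hilbertKernel_mul_rpow_le_right (hpq : 1 / p + 1 / q = 1) (hrs : r + s = lam)
    (hk_nonneg : ∀ x y, 0 < x → 0 < y → 0 ≤ k x y)
    (hint : IntegrableOn (fun u => k u 1 * u ^ (r - 1)) (Ioi 0))
    (hdec : AntitoneOn (fun u => k 1 u * u ^ (s - 1)) (Ioi 0)) (m : ℕ) :
    ∑' n : ℕ, hilbertKernel k p q r s m n * ENNReal.ofReal (((n : ℝ) + 1) ^ (-(1 / q)))
      ≤ ENNReal.ofReal (∫ u in Ioi 0, k u 1 * u ^ (r - 1))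
        * ENNReal.ofReal (((m : ℝ) + 1) ^ (-(1 / q))) := by
  have hμ := m.cast_add_one_pos (α := ℝ)
  have hswap : ∑' n : ℕ, ENNReal.ofReal (k ((m : ℝ) + 1) (n + 1) * ((n : ℝ) + 1) ^ (s - 1))
      ≤ ENNReal.ofReal ((∫ u in Ioi 0, k 1 u * u ^ (s - 1)) * ((m : ℝ) + 1) ^ (s - lam)) :=
    tsum_ofReal_kernel_mul_rpow_le (k := Function.swap k)
      (fun u x y hu hx hy => hk_hom u y x hu hy hx) (fun x y hx hy => hk_nonneg y x hy hx)
      (integrableOn_kernel_swap hk_hom hrs hint) hdec hμ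
  rw [integral_kernel_swap hk_hom hrs] at hswap
  calc _ = ENNReal.ofReal (((m : ℝ) + 1) ^ (r - 1 / q)) * ∑' n : ℕ,
        ENNReal.ofReal (k ((m : ℝ) + 1) (n + 1) * ((n : ℝ) + 1) ^ (s - 1)) := by
        rw [← ENNReal.tsum_mul_left]
        refine tsum_congr fun n => ?_
        have hν := n.cast_add_one_pos (α := ℝ)
        rw [hilbertKernel, ← ENNReal.ofReal_mul (mul_nonneg (by positivity) (hk_nonneg _ _ hμ hν)),
          ← ENNReal.ofReal_mul (by positivity)]
        congr 1
        rw [show s - 1 = s - 1 / p + -(1 / q) by linarith, Real.rpow_add hν]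
        ring
    _ ≤ ENNReal.ofReal (((m : ℝ) + 1) ^ (r - 1 / q)) *
        ENNReal.ofReal ((∫ u in Ioi 0, k u 1 * u ^ (r - 1)) * ((m : ℝ) + 1) ^ (s - lam)) := by
        gcongr
    _ = _ := by
        rw [← ENNReal.ofReal_mul (by positivity),
          ← ENNReal.ofReal_mul (integral_kernel_mul_rpow_nonneg hk_nonneg)]
        congr 1
        rw [show -(1 / q) = r - 1 / q + (s - lam) by linarith, Real.rpow_add hμ]
        ring

theorem tsum_rpow_tsum_hilbertKernel_mul_le (hpq : p.HolderConjugate q)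
    (hrs : r + s = lam) (hk_nonneg : ∀ x y, 0 < x → 0 < y → 0 ≤ k x y)
    (hint : IntegrableOn (fun u => k u 1 * u ^ (r - 1)) (Ioi 0))
    (hdec₁ : AntitoneOn (fun u => k u 1 * u ^ (r - 1)) (Ioi 0))
    (hdec₂ : AntitoneOn (fun u => k 1 u * u ^ (s - 1)) (Ioi 0)) (x : ℕ → ℝ≥0∞) :
    ∑' n : ℕ, (∑' m : ℕ, hilbertKernel k p q r s m n * x m) ^ p
      ≤ ENNReal.ofReal ((∫ u in Ioi 0, k u 1 * u ^ (r - 1)) ^ p) * ∑' m, x m ^ p := by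
  set kr := ∫ u in Ioi 0, k u 1 * u ^ (r - 1)
  have hkr : 0 ≤ kr := integral_kernel_mul_rpow_nonneg hk_nonneg
  have hpq_one_div : 1 / p + 1 / q = 1 := by simpa using hpq.one_div_add_one_div
  set φ : ℕ → ℝ≥0∞ := fun m => ENNReal.ofReal (((m : ℝ) + 1) ^ (-(p * q)⁻¹))
  have hφ_pow : ∀ (m : ℕ) {t : ℝ}, 0 ≤ t →
      φ m ^ t = ENNReal.ofReal (((m : ℝ) + 1) ^ (-(p * q)⁻¹ * t)) := fun m t ht => by
    rw [ENNReal.ofReal_rpow_of_nonneg (Real.rpow_nonneg m.cast_add_one_pos.le _) ht,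
      ← Real.rpow_mul m.cast_add_one_pos.le]
  have hφq : ∀ m, φ m ^ q = ENNReal.ofReal (((m : ℝ) + 1) ^ (-(1 / p))) := fun m => by
    rw [hφ_pow m hpq.symm.nonneg]; field_simp [hpq.symm.ne_zero]
  have hφp : ∀ m, φ m ^ p = ENNReal.ofReal (((m : ℝ) + 1) ^ (-(1 / q))) := fun m => by
    rw [hφ_pow m hpq.nonneg]; field_simp [hpq.ne_zero]
  have hC : ENNReal.ofReal kr ^ (p / q) * ENNReal.ofReal kr = ENNReal.ofReal (kr ^ p) := by
    rw [ENNReal.ofReal_rpow_of_nonneg hkr (div_nonneg hpq.nonneg hpq.symm.nonneg),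
      ← ENNReal.ofReal_mul (Real.rpow_nonneg hkr _), hpq.div_conj_eq_sub_one,
      ← Real.rpow_add_one' hkr (by linarith [hpq.pos]), sub_add_cancel]
  have hschur := ENNReal.tsum_rpow_tsum_mul_le_of_schur hpq _ φ φ
    (fun m => (ENNReal.ofReal_pos.2 (Real.rpow_pos_of_pos m.cast_add_one_pos _)).ne')
    (fun m => ENNReal.ofReal_ne_top)
    (by simpa only [hφq] using
      tsum_hilbertKernel_mul_rpow_le_left hk_hom hpq_one_div hrs hk_nonneg hint hdec₁)
    (by simpa only [hφp] using
      tsum_hilbertKernel_mul_rpow_le_right hk_hom hpq_one_div hrs hk_nonneg hint hdec₂) x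
  rwa [hC] at hschur

end Kernel

theorem discrete_hardy_hilbert_general_kernel_equivalent_form_general
    (p q lam r s : ℝ) (hp : 1 < p) (hpq : 1 / p + 1 / q = 1)
    (hrs : r + s = lam)
    (k : ℝ → ℝ → ℝ)
    (hk_pos : ∀ x y : ℝ, 0 < x → 0 < y → 0 < k x y)
    (hk_hom : ∀ u x y : ℝ, 0 < u → 0 < x → 0 < y →
      k (u * x) (u * y) = u ^ (-lam) * k x y)
    (kr : ℝ) (hkr_pos : 0 < kr)
    (hkr_int : IntegrableOn (fun u => k u 1 * u ^ (r - 1)) (Ioi (0:ℝ)))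
    (hkr : kr = ∫ u in Ioi (0:ℝ), k u 1 * u ^ (r - 1))
    (hk_dec₁ : AntitoneOn (fun u => k u 1 * u ^ (r - 1)) (Ioi (0:ℝ)))
    (hk_dec₂ : AntitoneOn (fun u => k 1 u * u ^ (s - 1)) (Ioi (0:ℝ)))
    (a : ℕ → ℝ) (ha : ∀ n, 0 ≤ a n)
    (ha_sum : Summable (fun n => a n ^ p))
    (A : ℕ → ℝ) (hA : ∀ n, A n = ∑ i ∈ Finset.range (n + 1), a i) :
    ∑' n : ℕ,
        (∑' m : ℕ, ENNReal.ofReal (((m : ℝ) + 1) ^ (r - 1 / q - 1) *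
          ((n : ℝ) + 1) ^ (s - 1 / p) * k ((m : ℝ) + 1) ((n : ℝ) + 1) * A m)) ^ p
      ≤ ENNReal.ofReal ((q * kr) ^ p * ∑' n, a n ^ p) := by
  have hconj : p.HolderConjugate q :=
    Real.holderConjugate_iff.2 ⟨hp, by simpa only [one_div] using hpq⟩
  have hsplit : ∀ m n : ℕ, ENNReal.ofReal (((m : ℝ) + 1) ^ (r - 1 / q - 1) *
      ((n : ℝ) + 1) ^ (s - 1 / p) * k ((m : ℝ) + 1) ((n : ℝ) + 1) * A m)
      = hilbertKernel k p q r s m n * ENNReal.ofReal (A m / (m + 1)) := by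
    intro m n
    have hμ := m.cast_add_one_pos (α := ℝ)
    rw [hilbertKernel,
      ← ENNReal.ofReal_mul (mul_nonneg (by positivity) (hk_pos _ _ hμ n.cast_add_one_pos).le),
      Real.rpow_sub_one hμ.ne']
    ring_nf
  simp_rw [hsplit]
  calc _ ≤ ENNReal.ofReal (kr ^ p) * ∑' m : ℕ, ENNReal.ofReal (A m / (m + 1)) ^ p := by
        rw [hkr]
        exact tsum_rpow_tsum_hilbertKernel_mul_le hk_hom hconj hrs
          (fun x y hx hy => (hk_pos x y hx hy).le) hkr_int hk_dec₁ hk_dec₂ _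
    _ ≤ ENNReal.ofReal (kr ^ p) * ENNReal.ofReal (q ^ p * ∑' n, a n ^ p) := by
        gcongr
        simpa only [hA] using hconj.hardy_tsum_le ha ha_sum
    _ = ENNReal.ofReal ((q * kr) ^ p * ∑' n, a n ^ p) := by
        rw [← ENNReal.ofReal_mul (Real.rpow_nonneg hkr_pos.le _),
          Real.mul_rpow hconj.symm.pos.le hkr_pos.le]
        ring_nf

theorem discrete_hardy_hilbert_general_kernel_equivalent_form
    (p q lam r s : ℝ) (hp : 1 < p) (hpq : 1 / p + 1 / q = 1)
    (hlam : 0 < lam) (hr : 0 < r) (hs : 0 < s) (hrs : r + s = lam)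
    (k : ℝ → ℝ → ℝ)
    (hk_meas : Measurable (Function.uncurry k))
    (hk_pos : ∀ x y : ℝ, 0 < x → 0 < y → 0 < k x y)
    (hk_hom : ∀ u x y : ℝ, 0 < u → 0 < x → 0 < y →
      k (u * x) (u * y) = u ^ (-lam) * k x y)
    (kr : ℝ) (hkr_pos : 0 < kr)
    (hkr_int : IntegrableOn (fun u => k u 1 * u ^ (r - 1)) (Ioi (0:ℝ)))
    (hkr : kr = ∫ u in Ioi (0:ℝ), k u 1 * u ^ (r - 1))
    (hk_dec₁ : AntitoneOn (fun u => k u 1 * u ^ (r - 1)) (Ioi (0:ℝ)))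
    (hk_dec₂ : AntitoneOn (fun u => k 1 u * u ^ (s - 1)) (Ioi (0:ℝ)))
    (a : ℕ → ℝ) (ha : ∀ n, 0 ≤ a n)
    (ha_sum : Summable (fun n => a n ^ p)) (ha_pos : 0 < ∑' n, a n ^ p)
    (A : ℕ → ℝ) (hA : ∀ n, A n = ∑ i ∈ Finset.range (n + 1), a i) :
    ∑' n : ℕ,
        (∑' m : ℕ, ENNReal.ofReal (((m : ℝ) + 1) ^ (r - 1 / q - 1) *
          ((n : ℝ) + 1) ^ (s - 1 / p) * k ((m : ℝ) + 1) ((n : ℝ) + 1) * A m)) ^ p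
      ≤ ENNReal.ofReal ((q * kr) ^ p * ∑' n, a n ^ p) :=
  discrete_hardy_hilbert_general_kernel_equivalent_form_general p q lam r s hp hpq hrs k hk_pos
    hk_hom kr hkr_pos hkr_int hkr hk_dec₁ hk_dec₂ a ha ha_sum A hA
end

section
/- For 0 < β < 1, λ > 0, and r, s > 0 with r + s = λ, ∫₀^∞ u^{r-1} / (|1-u|^β (max{1,u})^{λ-β}) du = B(r, 1-β) + B(s, 1-β). -/
open MeasureTheory Set

noncomputable def betaFn (a b : ℝ) : ℝ := ∫ t in (0:ℝ)..1, t ^ (a - 1) * (1 - t) ^ (b - 1)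

/-!
Split the integral at `u = 1`. On `(0, 1]` the kernel is exactly the Beta integrand
`u ^ (r - 1) * (1 - u) ^ (-β)`. On `(1, ∞)` the substitution `u = 1 / t` turns it into
`t ^ (λ - r - 1) * (1 - t) ^ (-β)`, the Beta integrand with parameter `s = λ - r`.
-/

section BetaIntegrand

lemma intervalIntegrable_rpow_mul_one_sub_rpow_zero_half {a : ℝ} (ha : 0 < a) (b : ℝ) :
    IntervalIntegrable (fun t : ℝ => t ^ (a - 1) * (1 - t) ^ (b - 1)) volume 0 (1 / 2) := by
  refine (intervalIntegral.intervalIntegrable_rpow' (by linarith)).mul_continuousOn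
    (ContinuousOn.rpow_const (by fun_prop) fun t ht => Or.inl ?_)
  rw [uIcc_of_le (by norm_num)] at ht
  linarith [ht.2]

/-- The singularity at `1` is the one at `0` seen through `t ↦ 1 - t`. -/
lemma integrableOn_rpow_mul_one_sub_rpow {a b : ℝ} (ha : 0 < a) (hb : 0 < b) :
    IntegrableOn (fun t : ℝ => t ^ (a - 1) * (1 - t) ^ (b - 1)) (Ioc 0 1) := by
  rw [← intervalIntegrable_iff_integrableOn_Ioc_of_le zero_le_one]
  refine (intervalIntegrable_rpow_mul_one_sub_rpow_zero_half ha b).trans ?_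
  rw [IntervalIntegrable.iff_comp_neg]
  convert ((intervalIntegrable_rpow_mul_one_sub_rpow_zero_half hb a).comp_add_right 1).symm
    using 1
  · ext t; ring_nf
  · norm_num
  · norm_num

end BetaIntegrand

section InvSubstitution

lemma image_inv_Ioo_zero_one : (fun t : ℝ => t⁻¹) '' Ioo 0 1 = Ioi 1 := by
  rw [image_inv_eq_inv, inv_Ioo_0_left one_pos, inv_one]

lemma hasDerivWithinAt_inv_Ioo_zero_one {t : ℝ} (ht : t ∈ Ioo (0 : ℝ) 1) :
    HasDerivWithinAt (fun t : ℝ => t⁻¹) (-(t ^ 2)⁻¹) (Ioo 0 1) t :=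
  (hasDerivAt_inv ht.1.ne').hasDerivWithinAt

lemma integrableOn_Ioi_one_iff_inv (f : ℝ → ℝ) :
    IntegrableOn f (Ioi 1) ↔ IntegrableOn (fun t => |(-(t ^ 2)⁻¹)| • f t⁻¹) (Ioo 0 1) := by
  rw [← image_inv_Ioo_zero_one]
  exact integrableOn_image_iff_integrableOn_abs_deriv_smul measurableSet_Ioo
    (fun _ => hasDerivWithinAt_inv_Ioo_zero_one) inv_injective.injOn f

lemma integral_Ioi_one_eq_inv (f : ℝ → ℝ) :
    ∫ u in Ioi 1, f u = ∫ t in Ioo 0 1, |(-(t ^ 2)⁻¹)| • f t⁻¹ := by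
  rw [← image_inv_Ioo_zero_one]
  exact integral_image_eq_integral_abs_deriv_smul measurableSet_Ioo
    (fun _ => hasDerivWithinAt_inv_Ioo_zero_one) inv_injective.injOn f

end InvSubstitution

section Kernel

variable {beta lam r : ℝ}

lemma kernel_eq_of_mem_Ioc (hb0 : 0 < beta) {u : ℝ} (hu : u ∈ Ioc (0 : ℝ) 1) :
    u ^ (r - 1) / (|1 - u| ^ beta * max 1 u ^ (lam - beta))
      = u ^ (r - 1) * (1 - u) ^ ((1 - beta) - 1) := by
  have hexp : (1 - beta) - 1 = -beta := by ring
  rcases hu.2.eq_or_lt with rfl | hu1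
  · simp [hexp, Real.zero_rpow hb0.ne', Real.zero_rpow (neg_ne_zero.mpr hb0.ne')]
  · have h1u : 0 < 1 - u := by linarith
    rw [max_eq_left hu1.le, Real.one_rpow, mul_one, abs_of_pos h1u, hexp, Real.rpow_neg h1u.le,
      div_eq_mul_inv]

lemma abs_deriv_inv_smul_kernel_inv {t : ℝ} (ht : t ∈ Ioo (0 : ℝ) 1) :
    |(-(t ^ 2)⁻¹)| • ((t⁻¹) ^ (r - 1) / (|1 - t⁻¹| ^ beta * max 1 t⁻¹ ^ (lam - beta)))
      = t ^ ((lam - r) - 1) * (1 - t) ^ ((1 - beta) - 1) := by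
  obtain ⟨ht0, ht1⟩ := ht
  have h1t : 0 < 1 - t := by linarith
  have habs : |1 - t⁻¹| = (1 - t) / t := by
    rw [abs_of_nonpos (by linarith [one_lt_inv_iff₀.2 ⟨ht0, ht1⟩]), neg_sub]
    field_simp
  have hsq : (t ^ 2)⁻¹ = t ^ (-2 : ℝ) := by
    rw [← Real.rpow_natCast t 2, ← Real.rpow_neg ht0.le]; norm_num
  rw [smul_eq_mul, habs, max_eq_right (one_le_inv₀ ht0 |>.2 ht1.le),
    Real.div_rpow h1t.le ht0.le, Real.inv_rpow ht0.le, Real.inv_rpow ht0.le,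
    ← Real.rpow_neg ht0.le, ← Real.rpow_neg ht0.le, abs_neg, abs_inv, abs_of_pos (by positivity),
    hsq, show (1 - beta) - 1 = -beta by ring, Real.rpow_neg h1t.le]
  have hne : ∀ x : ℝ, t ^ x ≠ 0 := fun x => (Real.rpow_pos_of_pos ht0 x).ne'
  have hne' : (1 - t) ^ beta ≠ 0 := (Real.rpow_pos_of_pos h1t beta).ne'
  field_simp
  rw [← Real.rpow_add ht0, ← Real.rpow_add ht0, ← Real.rpow_add ht0]
  ring_nf

end Kernel

theorem kernel_constant_abs_sub_max_general
    (beta lam r s : ℝ) (hb0 : 0 < beta) (hb1 : beta < 1)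
    (hr : 0 < r) (hs : 0 < s) (hrs : r + s = lam) :
    ∫ u in Ioi (0:ℝ), u ^ (r - 1) / (|1 - u| ^ beta * max 1 u ^ (lam - beta))
      = betaFn r (1 - beta) + betaFn s (1 - beta) := by
  obtain rfl : s = lam - r := by linarith
  have h1b : 0 < 1 - beta := by linarith
  have hnear (u) (hu : u ∈ Ioc (0 : ℝ) 1) := kernel_eq_of_mem_Ioc (r := r) (lam := lam) hb0 hu
  have hfar (t) (ht : t ∈ Ioo (0 : ℝ) 1) :=
    abs_deriv_inv_smul_kernel_inv (beta := beta) (lam := lam) (r := r) ht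
  have hint_near := (integrableOn_congr_fun hnear measurableSet_Ioc).2
    (integrableOn_rpow_mul_one_sub_rpow hr h1b)
  have hint_far := (integrableOn_Ioi_one_iff_inv
      fun u => u ^ (r - 1) / (|1 - u| ^ beta * max 1 u ^ (lam - beta))).2 <|
    (integrableOn_congr_fun hfar measurableSet_Ioo).2
      ((integrableOn_rpow_mul_one_sub_rpow hs h1b).mono_set Ioo_subset_Ioc_self)
  rw [← Ioc_union_Ioi_eq_Ioi zero_le_one,
    setIntegral_union (Ioc_disjoint_Ioi le_rfl) measurableSet_Ioi hint_near hint_far,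
    setIntegral_congr_fun measurableSet_Ioc hnear, integral_Ioi_one_eq_inv,
    setIntegral_congr_fun measurableSet_Ioo hfar, betaFn, betaFn,
    intervalIntegral.integral_of_le zero_le_one, intervalIntegral.integral_of_le zero_le_one,
    integral_Ioc_eq_integral_Ioo, integral_Ioc_eq_integral_Ioo]

theorem kernel_constant_abs_sub_max
    (beta lam r s : ℝ) (hb0 : 0 < beta) (hb1 : beta < 1) (hlam : 0 < lam)
    (hr : 0 < r) (hs : 0 < s) (hrs : r + s = lam) :
    ∫ u in Ioi (0:ℝ), u ^ (r - 1) / (|1 - u| ^ beta * max 1 u ^ (lam - beta))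
      = betaFn r (1 - beta) + betaFn s (1 - beta) :=
  kernel_constant_abs_sub_max_general beta lam r s hb0 hb1 hr hs hrs
end

section
/- For λ > 0, r, s > 0 with r + s = λ, and β > -min{r,s} with β ≠ 0, ∫₀^∞ |1 - u^β| u^{r-1} / (max{1,u})^{λ+β} du = |β| (r(r+β) + s(s+β)) / (r s (r+β)(s+β)). -/
open MeasureTheory Set

/-!
Split the half-line at `u = 1`. On each piece `1 - u ^ β` has constant sign, so the integral of
`|1 - u ^ β| * u ^ a` is the absolute value of a difference of two power integrals: on `(0, 1]`
it is `|1 / r - 1 / (r + β)|`, and on `(1, ∞)`, where `λ = r + s` turns the integrand into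
`|1 - u ^ β| u ^ (-s-β-1)`, it is `|1 / (s + β) - 1 / s|`.
-/

theorem setIntegral_abs_eq_abs_setIntegral {α : Type*} [MeasurableSpace α] {μ : Measure α}
    {s : Set α} {g : α → ℝ} (hs : MeasurableSet s)
    (hg : (∀ x ∈ s, 0 ≤ g x) ∨ (∀ x ∈ s, g x ≤ 0)) :
    ∫ x in s, |g x| ∂μ = |∫ x in s, g x ∂μ| := by
  rcases hg with hg | hg
  · rw [setIntegral_congr_fun hs fun x hx => abs_of_nonneg (hg x hx),
      abs_of_nonneg (setIntegral_nonneg hs hg)]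
  · rw [setIntegral_congr_fun hs fun x hx => abs_of_nonpos (hg x hx), integral_neg,
      abs_of_nonpos (setIntegral_nonpos hs hg)]

theorem one_sub_rpow_sign_Ioc (β : ℝ) :
    (∀ u ∈ Ioc (0 : ℝ) 1, 0 ≤ 1 - u ^ β) ∨ (∀ u ∈ Ioc (0 : ℝ) 1, 1 - u ^ β ≤ 0) := by
  rcases le_total 0 β with hβ | hβ
  · exact .inl fun u hu => sub_nonneg.2 (Real.rpow_le_one hu.1.le hu.2 hβ)
  · exact .inr fun u hu => sub_nonpos.2 (Real.one_le_rpow_of_pos_of_le_one_of_nonpos hu.1 hu.2 hβ)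

theorem one_sub_rpow_sign_Ioi (β : ℝ) :
    (∀ u ∈ Ioi (1 : ℝ), 0 ≤ 1 - u ^ β) ∨ (∀ u ∈ Ioi (1 : ℝ), 1 - u ^ β ≤ 0) := by
  rcases le_total 0 β with hβ | hβ
  · exact .inr fun u hu => sub_nonpos.2 (Real.one_le_rpow (le_of_lt hu) hβ)
  · exact .inl fun u hu => sub_nonneg.2 (Real.rpow_le_one_of_one_le_of_nonpos (le_of_lt hu) hβ)

section PowerWeight

variable {S : Set ℝ} {a β : ℝ}

theorem abs_one_sub_rpow_mul_rpow_eqOn (hS : S ⊆ Ioi 0) :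
    EqOn (fun u => |1 - u ^ β| * u ^ a) (fun u => |u ^ a - u ^ (a + β)|) S := by
  intro u hu
  have hu : 0 < u := hS hu
  dsimp only
  rw [Real.rpow_add hu, ← mul_one_sub, abs_mul, abs_of_pos (Real.rpow_pos_of_pos hu a), mul_comm]

theorem integrableOn_abs_one_sub_rpow_mul_rpow (hSm : MeasurableSet S) (hS : S ⊆ Ioi 0)
    (ha : IntegrableOn (fun u : ℝ => u ^ a) S)
    (haβ : IntegrableOn (fun u : ℝ => u ^ (a + β)) S) :
    IntegrableOn (fun u => |1 - u ^ β| * u ^ a) S :=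
  IntegrableOn.congr_fun (ha.sub haβ).abs (abs_one_sub_rpow_mul_rpow_eqOn hS).symm hSm

theorem setIntegral_abs_one_sub_rpow_mul_rpow (hSm : MeasurableSet S) (hS : S ⊆ Ioi 0)
    (hsign : (∀ u ∈ S, 0 ≤ 1 - u ^ β) ∨ (∀ u ∈ S, 1 - u ^ β ≤ 0))
    (ha : IntegrableOn (fun u : ℝ => u ^ a) S)
    (haβ : IntegrableOn (fun u : ℝ => u ^ (a + β)) S) :
    ∫ u in S, |1 - u ^ β| * u ^ a = |(∫ u in S, u ^ a) - ∫ u in S, u ^ (a + β)| := by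
  have hsign' : (∀ u ∈ S, 0 ≤ u ^ a - u ^ (a + β)) ∨ (∀ u ∈ S, u ^ a - u ^ (a + β) ≤ 0) := by
    have key : ∀ u ∈ S, u ^ a - u ^ (a + β) = u ^ a * (1 - u ^ β) := fun u hu => by
      rw [Real.rpow_add (hS hu)]; ring
    have hpos : ∀ u ∈ S, 0 < u ^ a := fun u hu => Real.rpow_pos_of_pos (hS hu) a
    refine hsign.imp (fun h u hu => ?_) (fun h u hu => ?_) <;> rw [key u hu]
    · exact mul_nonneg (hpos u hu).le (h u hu)
    · exact mul_nonpos_of_nonneg_of_nonpos (hpos u hu).le (h u hu)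
  rw [setIntegral_congr_fun hSm (abs_one_sub_rpow_mul_rpow_eqOn hS),
    setIntegral_abs_eq_abs_setIntegral hSm hsign', integral_sub ha haβ]

end PowerWeight

theorem abs_inv_sub_inv_add {c β : ℝ} (hc : 0 < c) (hcβ : 0 < c + β) :
    |c⁻¹ - (c + β)⁻¹| = |β| / (c * (c + β)) := by
  rw [inv_sub_inv hc.ne' hcβ.ne', abs_div, abs_of_pos (mul_pos hc hcβ), add_sub_cancel_left]

theorem integral_Ioc_zero_one_rpow_sub_one {c : ℝ} (hc : 0 < c) :
    ∫ u in Ioc (0 : ℝ) 1, u ^ (c - 1) = c⁻¹ := by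
  rw [← intervalIntegral.integral_of_le zero_le_one,
    integral_rpow (.inl (by linarith)), sub_add_cancel, Real.one_rpow, Real.zero_rpow hc.ne']
  ring

theorem integrableOn_Ioc_zero_one_rpow_sub_one {c : ℝ} (hc : 0 < c) :
    IntegrableOn (fun u : ℝ => u ^ (c - 1)) (Ioc 0 1) :=
  (intervalIntegrable_iff_integrableOn_Ioc_of_le zero_le_one).1
    (intervalIntegral.intervalIntegrable_rpow' (by linarith))

theorem integral_Ioi_one_rpow_neg_sub_one {c : ℝ} (hc : 0 < c) :
    ∫ u in Ioi (1 : ℝ), u ^ (-c - 1) = c⁻¹ := by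
  rw [integral_Ioi_rpow_of_lt (by linarith) one_pos, Real.one_rpow, sub_add_cancel, div_neg,
    neg_div, neg_neg, one_div]

theorem integrableOn_Ioi_one_rpow_neg_sub_one {c : ℝ} (hc : 0 < c) :
    IntegrableOn (fun u : ℝ => u ^ (-c - 1)) (Ioi 1) :=
  integrableOn_Ioi_rpow_of_lt (by linarith) one_pos

section PowerIntegrals

variable {c β : ℝ}

theorem integrableOn_Ioc_zero_one_abs_one_sub_rpow_mul_rpow (hc : 0 < c) (hcβ : 0 < c + β) :
    IntegrableOn (fun u : ℝ => |1 - u ^ β| * u ^ (c - 1)) (Ioc 0 1) := by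
  have hexp : c - 1 + β = c + β - 1 := by ring
  exact integrableOn_abs_one_sub_rpow_mul_rpow measurableSet_Ioc Ioc_subset_Ioi_self
    (integrableOn_Ioc_zero_one_rpow_sub_one hc) (hexp ▸ integrableOn_Ioc_zero_one_rpow_sub_one hcβ)

theorem integrableOn_Ioi_one_abs_one_sub_rpow_mul_rpow (hc : 0 < c) (hcβ : 0 < c + β) :
    IntegrableOn (fun u : ℝ => |1 - u ^ β| * u ^ (-(c + β) - 1)) (Ioi 1) := by
  have hexp : -(c + β) - 1 + β = -c - 1 := by ring
  exact integrableOn_abs_one_sub_rpow_mul_rpow measurableSet_Ioi (Ioi_subset_Ioi zero_le_one)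
    (integrableOn_Ioi_one_rpow_neg_sub_one hcβ) (hexp ▸ integrableOn_Ioi_one_rpow_neg_sub_one hc)

theorem integral_Ioc_zero_one_abs_one_sub_rpow_mul_rpow (hc : 0 < c) (hcβ : 0 < c + β) :
    ∫ u in Ioc (0 : ℝ) 1, |1 - u ^ β| * u ^ (c - 1) = |β| / (c * (c + β)) := by
  have hexp : c - 1 + β = c + β - 1 := by ring
  rw [setIntegral_abs_one_sub_rpow_mul_rpow measurableSet_Ioc Ioc_subset_Ioi_self
      (one_sub_rpow_sign_Ioc β) (integrableOn_Ioc_zero_one_rpow_sub_one hc)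
      (hexp ▸ integrableOn_Ioc_zero_one_rpow_sub_one hcβ),
    hexp, integral_Ioc_zero_one_rpow_sub_one hc, integral_Ioc_zero_one_rpow_sub_one hcβ,
    abs_inv_sub_inv_add hc hcβ]

theorem integral_Ioi_one_abs_one_sub_rpow_mul_rpow (hc : 0 < c) (hcβ : 0 < c + β) :
    ∫ u in Ioi (1 : ℝ), |1 - u ^ β| * u ^ (-(c + β) - 1) = |β| / (c * (c + β)) := by
  have hexp : -(c + β) - 1 + β = -c - 1 := by ring
  rw [setIntegral_abs_one_sub_rpow_mul_rpow measurableSet_Ioi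
      (Ioi_subset_Ioi zero_le_one) (one_sub_rpow_sign_Ioi β)
      (integrableOn_Ioi_one_rpow_neg_sub_one hcβ)
      (hexp ▸ integrableOn_Ioi_one_rpow_neg_sub_one hc),
    hexp, integral_Ioi_one_rpow_neg_sub_one hc, integral_Ioi_one_rpow_neg_sub_one hcβ,
    abs_sub_comm, abs_inv_sub_inv_add hc hcβ]

end PowerIntegrals

theorem kernel_constant_abs_pow_sub_max_general
    (beta lam r s : ℝ)
    (hr : 0 < r) (hs : 0 < s) (hrs : r + s = lam)
    (hbeta : -min r s < beta) :
    ∫ u in Ioi (0:ℝ), |1 - u ^ beta| * u ^ (r - 1) / max 1 u ^ (lam + beta)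
      = |beta| * (r * (r + beta) + s * (s + beta)) /
          (r * s * (r + beta) * (s + beta)) := by
  have hrb : 0 < r + beta := by linarith [min_le_left r s]
  have hsb : 0 < s + beta := by linarith [min_le_right r s]
  have hIoc : EqOn (fun u : ℝ => |1 - u ^ beta| * u ^ (r - 1) / max 1 u ^ (lam + beta))
      (fun u => |1 - u ^ beta| * u ^ (r - 1)) (Ioc 0 1) := fun u hu => by
    simp only [max_eq_left hu.2, Real.one_rpow, div_one]
  have hIoi : EqOn (fun u : ℝ => |1 - u ^ beta| * u ^ (r - 1) / max 1 u ^ (lam + beta))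
      (fun u => |1 - u ^ beta| * u ^ (-(s + beta) - 1)) (Ioi 1) := fun u hu => by
    have hu0 : (0 : ℝ) < u := lt_trans one_pos hu
    dsimp only
    rw [max_eq_right (le_of_lt hu), mul_div_assoc, ← Real.rpow_sub hu0, ← hrs]
    congr 2
    ring
  rw [← Ioc_union_Ioi_eq_Ioi zero_le_one,
    setIntegral_union (Ioc_disjoint_Ioi le_rfl) measurableSet_Ioi
      ((integrableOn_Ioc_zero_one_abs_one_sub_rpow_mul_rpow hr hrb).congr_fun hIoc.symm
        measurableSet_Ioc)
      ((integrableOn_Ioi_one_abs_one_sub_rpow_mul_rpow hs hsb).congr_fun hIoi.symm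
        measurableSet_Ioi),
    setIntegral_congr_fun measurableSet_Ioc hIoc, setIntegral_congr_fun measurableSet_Ioi hIoi,
    integral_Ioc_zero_one_abs_one_sub_rpow_mul_rpow hr hrb,
    integral_Ioi_one_abs_one_sub_rpow_mul_rpow hs hsb]
  field_simp
  ring

theorem kernel_constant_abs_pow_sub_max
    (beta lam r s : ℝ) (hlam : 0 < lam)
    (hr : 0 < r) (hs : 0 < s) (hrs : r + s = lam)
    (hbeta : -min r s < beta) (hbeta0 : beta ≠ 0) :
    ∫ u in Ioi (0:ℝ), |1 - u ^ beta| * u ^ (r - 1) / max 1 u ^ (lam + beta)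
      = |beta| * (r * (r + beta) + s * (s + beta)) /
          (r * s * (r + beta) * (s + beta)) :=
  kernel_constant_abs_pow_sub_max_general beta lam r s hr hs hrs hbeta
end

section
/- Let p > 1, 1/p + 1/q = 1, 0 < λ < 1, r, s > 0 with r + s = λ. Let f, g : (0,∞) → [0,∞) be measurable with 0 < ∫₀^∞ f^p < ∞, 0 < ∫₀^∞ g^q < ∞, and F(x) = ∫₀^x f, G(y) = ∫₀^y g. Then ∫₀^∞ ∫₀^∞ x^{r-1/q-1} y^{s-1/p-1} F(x) G(y) / |x-y|^λ dx dy ≤ pq (B(r,1-λ) + B(s,1-λ)) (∫₀^∞ f^p)^{1/p} (∫₀^∞ g^q)^{1/q}. -/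
/-!
Write the integrand as `A ^ (1/p) * B ^ (1/q)` with
`A = x^(r-p) y^(s-1) |x-y|^(-λ) F(x)^p` and `B = x^(r-1) y^(s-q) |x-y|^(-λ) G(y)^q`, and apply
Hölder's inequality for the product measure. By homogeneity of the kernel,
`∫₀^∞ y^(s-1) |x-y|^(-λ) dy = (B(s,1-λ) + B(r,1-λ)) x^(s-λ)` (split at `y = x` and substitute
`y = x/u` beyond it), so `∬ A` is this constant times `∫₀^∞ x^(-p) F(x)^p`, which Hardy's
inequality bounds by `q^p ∫₀^∞ f^p`; `B` is handled in the same way with the roles of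
`(x, r, p, f)` and `(y, s, q, g)` exchanged.
-/

open MeasureTheory Set

open scoped ENNReal

lemma betaFn_nonneg (a b : ℝ) : 0 ≤ betaFn a b :=
  intervalIntegral.integral_nonneg zero_le_one fun _ ht =>
    mul_nonneg (Real.rpow_nonneg ht.1 _) (Real.rpow_nonneg (sub_nonneg.2 ht.2) _)

lemma intervalIntegrable_betaFn_integrand {a b : ℝ} (ha : 0 < a) (hb : 0 < b) :
    IntervalIntegrable (fun t : ℝ => t ^ (a - 1) * (1 - t) ^ (b - 1)) volume 0 1 := by
  have left :
      IntervalIntegrable (fun t : ℝ => t ^ (a - 1) * (1 - t) ^ (b - 1)) volume 0 (1 / 2) := by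
    refine (intervalIntegral.intervalIntegrable_rpow' (by linarith)).mul_continuousOn ?_
    intro t ht
    rw [uIcc_of_le (by norm_num)] at ht
    exact (ContinuousAt.rpow_const (f := fun t : ℝ => 1 - t) (by fun_prop)
      (Or.inl (by linarith [ht.2] : (0:ℝ) < 1 - t).ne')).continuousWithinAt
  have right :
      IntervalIntegrable (fun t : ℝ => t ^ (a - 1) * (1 - t) ^ (b - 1)) volume (1 / 2) 1 := by
    have base : IntervalIntegrable (fun t : ℝ => (1 - t) ^ (b - 1)) volume (1 / 2) 1 := by
      have := (intervalIntegral.intervalIntegrable_rpow' (by linarith : (-1:ℝ) < b - 1)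
        (a := 0) (b := 1 / 2)).comp_sub_left 1
      norm_num at this
      exact this.symm
    refine base.continuousOn_mul ?_
    intro t ht
    rw [uIcc_of_le (by norm_num)] at ht
    exact (continuousAt_id.rpow_const
      (Or.inl (by linarith [ht.1] : (0:ℝ) < t).ne')).continuousWithinAt
  exact left.trans right

lemma lintegral_Ioo_betaFn_integrand {a b : ℝ} (ha : 0 < a) (hb : 0 < b) :
    ∫⁻ t in Ioo (0:ℝ) 1, ENNReal.ofReal (t ^ (a - 1) * (1 - t) ^ (b - 1)) =
      ENNReal.ofReal (betaFn a b) := by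
  have hint := (intervalIntegrable_iff_integrableOn_Ioo_of_le zero_le_one).1
    (intervalIntegrable_betaFn_integrand ha hb)
  rw [← ofReal_integral_eq_lintegral_ofReal hint, betaFn,
    intervalIntegral.integral_of_le zero_le_one, integral_Ioc_eq_integral_Ioo]
  filter_upwards [ae_restrict_mem measurableSet_Ioo] with t ht
  exact mul_nonneg (Real.rpow_nonneg ht.1.le _) (Real.rpow_nonneg (by linarith [ht.2]) _)

lemma lintegral_Ioo_rpow {c x : ℝ} (hc : -1 < c) (hx : 0 < x) :
    ∫⁻ t in Ioo (0:ℝ) x, ENNReal.ofReal (t ^ c) = ENNReal.ofReal (x ^ (c + 1) / (c + 1)) := by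
  have hint := (intervalIntegrable_iff_integrableOn_Ioo_of_le hx.le).1
    (intervalIntegral.intervalIntegrable_rpow' (a := 0) (b := x) hc)
  rw [← ofReal_integral_eq_lintegral_ofReal hint, ← integral_Ioc_eq_integral_Ioo,
    ← intervalIntegral.integral_of_le hx.le, integral_rpow (Or.inl hc),
    Real.zero_rpow (by linarith), sub_zero]
  filter_upwards [ae_restrict_mem measurableSet_Ioo] with t ht
  exact Real.rpow_nonneg ht.1.le c

lemma lintegral_Ioi_rpow {c x : ℝ} (hc : c < -1) (hx : 0 < x) :
    ∫⁻ t in Ioi x, ENNReal.ofReal (t ^ c) = ENNReal.ofReal (-x ^ (c + 1) / (c + 1)) := by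
  rw [← ofReal_integral_eq_lintegral_ofReal (integrableOn_Ioi_rpow_of_lt hc hx),
    integral_Ioi_rpow_of_lt hc hx]
  filter_upwards [ae_restrict_mem measurableSet_Ioi] with t ht
  exact Real.rpow_nonneg (hx.le.trans ht.le) c

lemma ofReal_intervalIntegral_le_setLIntegral_Ioo {f : ℝ → ℝ} (hf : ∀ t, 0 ≤ f t) {x : ℝ}
    (hx : 0 ≤ x) :
    ENNReal.ofReal (∫ t in (0:ℝ)..x, f t) ≤ ∫⁻ t in Ioo (0:ℝ) x, ENNReal.ofReal (f t) := by
  rw [intervalIntegral.integral_of_le hx, integral_Ioc_eq_integral_Ioo]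
  calc ENNReal.ofReal (∫ t in Ioo (0:ℝ) x, f t)
      ≤ ‖∫ t in Ioo (0:ℝ) x, f t‖ₑ := Real.ofReal_le_enorm _
    _ ≤ ∫⁻ t in Ioo (0:ℝ) x, ‖f t‖ₑ := enorm_integral_le_lintegral_enorm _
    _ = _ := by simp_rw [Real.enorm_of_nonneg (hf _)]

lemma lintegral_ofReal_rpow_eq_ofReal_integral {f : ℝ → ℝ} (hf : ∀ t, 0 ≤ f t) {p : ℝ}
    (hp : 0 ≤ p) {s : Set ℝ} (hint : IntegrableOn (fun t => f t ^ p) s) :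
    ∫⁻ t in s, ENNReal.ofReal (f t) ^ p = ENNReal.ofReal (∫ t in s, f t ^ p) := by
  rw [ofReal_integral_eq_lintegral_ofReal hint (ae_of_all _ fun t => Real.rpow_nonneg (hf t) p)]
  simp_rw [ENNReal.ofReal_rpow_of_nonneg (hf _) hp]

section Kernel

variable {σ lam : ℝ}

lemma lintegral_Ioi_one_rpow_mul_abs_one_sub_rpow (hσ : σ < lam) (hlam : lam < 1) :
    ∫⁻ t in Ioi (1:ℝ), ENNReal.ofReal (t ^ (σ - 1) * |1 - t| ^ (-lam)) =
      ENNReal.ofReal (betaFn (lam - σ) (1 - lam)) := by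
  have himg : (fun u : ℝ => u⁻¹) '' Ioo 0 1 = Ioi 1 := by
    simpa [Set.image_inv] using Set.inv_Ioo_0_left (a := (1:ℝ)) one_pos
  rw [← himg, lintegral_image_eq_lintegral_abs_deriv_mul measurableSet_Ioo
      (fun u hu => (hasDerivAt_inv hu.1.ne').hasDerivWithinAt) (fun u _ v _ h => inv_injective h),
    ← lintegral_Ioo_betaFn_integrand (by linarith) (by linarith)]
  refine setLIntegral_congr_fun measurableSet_Ioo fun u ⟨hu0, hu1⟩ => ?_
  have h1u : 0 < 1 - u := by linarith
  have habs : |1 - u⁻¹| = (1 - u) * u⁻¹ := by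
    rw [abs_of_nonpos (by linarith [(one_lt_inv₀ hu0).2 hu1])]
    field_simp
    ring
  rw [abs_neg, abs_of_pos (by positivity), habs, ← ENNReal.ofReal_mul (by positivity),
    Real.mul_rpow h1u.le (by positivity), Real.inv_rpow hu0.le, Real.inv_rpow hu0.le,
    ← Real.rpow_neg hu0.le, ← Real.rpow_neg hu0.le, neg_neg, ← Real.rpow_natCast,
    ← Real.rpow_neg hu0.le]
  congr 1
  calc u ^ (-((2:ℕ):ℝ)) * (u ^ (-(σ - 1)) * ((1 - u) ^ (-lam) * u ^ lam))
      = u ^ (-((2:ℕ):ℝ) + -(σ - 1) + lam) * (1 - u) ^ (-lam) := by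
        rw [Real.rpow_add hu0, Real.rpow_add hu0]; ring
    _ = u ^ (lam - σ - 1) * (1 - u) ^ (1 - lam - 1) := by
        congr 2 <;> push_cast <;> ring

lemma lintegral_Ioi_rpow_mul_abs_one_sub_rpow (hσ : 0 < σ) (hσlam : σ < lam) (hlam : lam < 1) :
    ∫⁻ t in Ioi (0:ℝ), ENNReal.ofReal (t ^ (σ - 1) * |1 - t| ^ (-lam)) =
      ENNReal.ofReal (betaFn σ (1 - lam) + betaFn (lam - σ) (1 - lam)) := by
  have hIoo : ∫⁻ t in Ioo (0:ℝ) 1, ENNReal.ofReal (t ^ (σ - 1) * |1 - t| ^ (-lam)) =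
      ENNReal.ofReal (betaFn σ (1 - lam)) := by
    rw [← lintegral_Ioo_betaFn_integrand hσ (by linarith)]
    refine setLIntegral_congr_fun measurableSet_Ioo fun t ht => ?_
    rw [abs_of_pos (by linarith [ht.2]), sub_sub_cancel_left]
  rw [← Ioo_union_Ici_eq_Ioi zero_lt_one, lintegral_union measurableSet_Ici
      (Set.disjoint_left.2 fun _ ha hb => (not_lt.2 hb) ha.2),
    Measure.restrict_congr_set Ioi_ae_eq_Ici.symm, hIoo,
    lintegral_Ioi_one_rpow_mul_abs_one_sub_rpow hσlam hlam,
    ← ENNReal.ofReal_add (betaFn_nonneg _ _) (betaFn_nonneg _ _)]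

lemma lintegral_Ioi_rpow_mul_abs_sub_rpow_eq_rpow_mul {x : ℝ} (hx : 0 < x) :
    ∫⁻ y in Ioi (0:ℝ), ENNReal.ofReal (y ^ (σ - 1) * |x - y| ^ (-lam)) =
      ENNReal.ofReal (x ^ (σ - lam)) *
        ∫⁻ t in Ioi (0:ℝ), ENNReal.ofReal (t ^ (σ - 1) * |1 - t| ^ (-lam)) := by
  rw [← lintegral_const_mul' _ _ ENNReal.ofReal_ne_top]
  conv_lhs => rw [← image_const_mul_Ioi_zero hx, lintegral_image_eq_lintegral_abs_deriv_mul
    measurableSet_Ioi (fun t _ => by simpa using ((hasDerivAt_id t).const_mul x).hasDerivWithinAt)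
    (fun u _ v _ h => mul_left_cancel₀ hx.ne' h)]
  refine setLIntegral_congr_fun measurableSet_Ioi fun t (ht : 0 < t) => ?_
  have habs : |x - x * t| = x * |1 - t| := by
    rw [← mul_one_sub, abs_mul, abs_of_pos hx]
  rw [abs_of_pos hx, habs, ← ENNReal.ofReal_mul hx.le,
    ← ENNReal.ofReal_mul (Real.rpow_nonneg hx.le _)]
  congr 1
  rw [Real.mul_rpow hx.le ht.le, Real.mul_rpow hx.le (abs_nonneg _), Real.rpow_sub hx,
    Real.rpow_sub hx, Real.rpow_one, Real.rpow_neg hx.le]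
  field_simp

theorem lintegral_Ioi_rpow_mul_abs_sub_rpow (hσ : 0 < σ) (hσlam : σ < lam) (hlam : lam < 1)
    {x : ℝ} (hx : 0 < x) :
    ∫⁻ y in Ioi (0:ℝ), ENNReal.ofReal (y ^ (σ - 1) * |x - y| ^ (-lam)) =
      ENNReal.ofReal (x ^ (σ - lam)) *
        ENNReal.ofReal (betaFn σ (1 - lam) + betaFn (lam - σ) (1 - lam)) := by
  rw [lintegral_Ioi_rpow_mul_abs_sub_rpow_eq_rpow_mul hx,
    lintegral_Ioi_rpow_mul_abs_one_sub_rpow hσ hσlam hlam]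

end Kernel

section Hardy

variable {p q : ℝ} {f : ℝ → ℝ≥0∞}

lemma measurable_setLIntegral_Ioo_zero (f : ℝ → ℝ≥0∞) :
    Measurable fun x => ∫⁻ t in Ioo (0:ℝ) x, f t :=
  Monotone.measurable fun _ _ h => lintegral_mono_set (Ioo_subset_Ioo_right h)

lemma lintegral_Ioi_mul_setLIntegral_Ioo {w c : ℝ → ℝ≥0∞} (hw : Measurable w)
    (hc : Measurable c) :
    ∫⁻ x in Ioi (0:ℝ), w x * ∫⁻ t in Ioo 0 x, c t =
      ∫⁻ t in Ioi (0:ℝ), c t * ∫⁻ x in Ioi t, w x := by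
  let K : ℝ → ℝ → ℝ≥0∞ := fun x t =>
    {z : ℝ × ℝ | z.2 < z.1}.indicator (fun z => w z.1 * c z.2) (x, t)
  have hK : Measurable (Function.uncurry K) :=
    ((hw.comp measurable_fst).mul (hc.comp measurable_snd)).indicator
      (measurableSet_lt measurable_snd measurable_fst)
  calc ∫⁻ x in Ioi (0:ℝ), w x * ∫⁻ t in Ioo 0 x, c t
      = ∫⁻ x in Ioi (0:ℝ), ∫⁻ t in Ioi 0, K x t := by
        refine lintegral_congr fun x => ?_
        change _ = ∫⁻ t in Ioi 0, (Iio x).indicator (fun t => w x * c t) t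
        rw [lintegral_indicator measurableSet_Iio, Measure.restrict_restrict measurableSet_Iio,
          Iio_inter_Ioi, lintegral_const_mul _ hc]
    _ = ∫⁻ t in Ioi (0:ℝ), ∫⁻ x in Ioi 0, K x t := lintegral_lintegral_swap hK.aemeasurable
    _ = ∫⁻ t in Ioi (0:ℝ), c t * ∫⁻ x in Ioi t, w x := by
        refine setLIntegral_congr_fun measurableSet_Ioi fun t (ht : 0 < t) => ?_
        change ∫⁻ x in Ioi 0, (Ioi t).indicator (fun x => w x * c t) x = _
        rw [lintegral_indicator measurableSet_Ioi, Measure.restrict_restrict measurableSet_Ioi,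
          inter_eq_left.2 (Ioi_subset_Ioi ht.le), lintegral_mul_const _ hw, mul_comm]

-- Hölder's inequality against the weights `t ^ (± 1 / (p * q))`.
lemma setLIntegral_Ioo_rpow_le (hpq : p.HolderConjugate q) (hf : Measurable f) {x : ℝ}
    (hx : 0 < x) :
    (∫⁻ t in Ioo (0:ℝ) x, f t) ^ p ≤ ENNReal.ofReal ((q * x ^ (1 / q)) ^ (p - 1)) *
      ∫⁻ t in Ioo (0:ℝ) x, f t ^ p * ENNReal.ofReal (t ^ (1 / q)) := by
  obtain ⟨hp, hq⟩ : 0 < p ∧ 0 < q := ⟨hpq.pos, hpq.symm.pos⟩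
  obtain ⟨α, hαp, hαq⟩ : ∃ α : ℝ, α * p = 1 / q ∧ α * q = 1 / p :=
    ⟨1 / (p * q), by field_simp, by field_simp⟩
  have hsplit : ∫⁻ t in Ioo (0:ℝ) x, f t = ∫⁻ t in Ioo (0:ℝ) x,
      ((fun t => f t * ENNReal.ofReal (t ^ α)) * fun t => ENNReal.ofReal (t ^ (-α))) t := by
    refine setLIntegral_congr_fun measurableSet_Ioo fun t ht => ?_
    rw [Pi.mul_apply, mul_assoc, ← ENNReal.ofReal_mul (Real.rpow_nonneg ht.1.le _),
      ← Real.rpow_add ht.1, add_neg_cancel, Real.rpow_zero, ENNReal.ofReal_one, mul_one]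
  have hweight : ∫⁻ t in Ioo (0:ℝ) x, (f t * ENNReal.ofReal (t ^ α)) ^ p =
      ∫⁻ t in Ioo (0:ℝ) x, f t ^ p * ENNReal.ofReal (t ^ (1 / q)) := by
    refine setLIntegral_congr_fun measurableSet_Ioo fun t ht => ?_
    rw [ENNReal.mul_rpow_of_nonneg _ _ hp.le, ENNReal.ofReal_rpow_of_nonneg
      (Real.rpow_nonneg ht.1.le _) hp.le, ← Real.rpow_mul ht.1.le, hαp]
  have hdual : ∫⁻ t in Ioo (0:ℝ) x, ENNReal.ofReal (t ^ (-α)) ^ q =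
      ENNReal.ofReal (q * x ^ (1 / q)) := by
    have hexp : -(1 / p) + 1 = 1 / q := by linarith [hpq.one_div_add_one_div]
    calc ∫⁻ t in Ioo (0:ℝ) x, ENNReal.ofReal (t ^ (-α)) ^ q
        = ∫⁻ t in Ioo (0:ℝ) x, ENNReal.ofReal (t ^ (-(1 / p))) := by
          refine setLIntegral_congr_fun measurableSet_Ioo fun t ht => ?_
          rw [ENNReal.ofReal_rpow_of_nonneg (Real.rpow_nonneg ht.1.le _) hq.le,
            ← Real.rpow_mul ht.1.le, neg_mul, hαq]
      _ = ENNReal.ofReal (q * x ^ (1 / q)) := by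
          rw [lintegral_Ioo_rpow (by linarith [one_div_pos.2 hq]) hx, hexp]
          field_simp
  have hholder := ENNReal.lintegral_mul_le_Lp_mul_Lq (volume.restrict (Ioo (0:ℝ) x)) hpq
    (by fun_prop : Measurable fun t => f t * ENNReal.ofReal (t ^ α)).aemeasurable
    (by fun_prop : Measurable fun t : ℝ => ENNReal.ofReal (t ^ (-α))).aemeasurable
  rw [← hsplit, hweight, hdual] at hholder
  calc (∫⁻ t in Ioo (0:ℝ) x, f t) ^ p
      ≤ ((∫⁻ t in Ioo (0:ℝ) x, f t ^ p * ENNReal.ofReal (t ^ (1 / q))) ^ (1 / p) *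
          ENNReal.ofReal (q * x ^ (1 / q)) ^ (1 / q)) ^ p :=
        ENNReal.rpow_le_rpow hholder hp.le
    _ = _ := by
        rw [ENNReal.mul_rpow_of_nonneg _ _ hp.le, ← ENNReal.rpow_mul, ← ENNReal.rpow_mul,
          one_div_mul_cancel hp.ne', ENNReal.rpow_one, one_div_mul_eq_div, hpq.div_conj_eq_sub_one,
          ENNReal.ofReal_rpow_of_nonneg (by positivity) hpq.sub_one_pos.le, mul_comm]

theorem hardy_lintegral_le (hpq : p.HolderConjugate q) (hf : Measurable f) :
    ∫⁻ x in Ioi (0:ℝ), ENNReal.ofReal (x ^ (-p)) * (∫⁻ t in Ioo (0:ℝ) x, f t) ^ p ≤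
      ENNReal.ofReal (q ^ p) * ∫⁻ t in Ioi (0:ℝ), f t ^ p := by
  obtain ⟨hp, hq⟩ : 0 < p ∧ 0 < q := ⟨hpq.pos, hpq.symm.pos⟩
  have hexp : -p + 1 / q * (p - 1) = -1 - 1 / q := by
    field_simp
    linarith [hpq.mul_eq_add]
  have htail : ∀ t : ℝ, 0 < t →
      ENNReal.ofReal (t ^ (1 / q)) * ∫⁻ x in Ioi t, ENNReal.ofReal (q ^ (p - 1) * x ^ (-1 - 1 / q))
        = ENNReal.ofReal (q ^ p) := by
    intro t ht
    simp_rw [ENNReal.ofReal_mul (Real.rpow_nonneg hq.le _)]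
    rw [lintegral_const_mul' _ _ ENNReal.ofReal_ne_top, mul_comm,
      lintegral_Ioi_rpow (by linarith [one_div_pos.2 hq]) ht,
      ← ENNReal.ofReal_mul (Real.rpow_nonneg hq.le _),
      ← ENNReal.ofReal_mul' (Real.rpow_nonneg ht.le _)]
    congr 1
    rw [show -1 - 1 / q + 1 = -(1 / q) by ring, neg_div_neg_eq, mul_assoc, div_mul_eq_mul_div,
      ← Real.rpow_add ht, neg_add_cancel, Real.rpow_zero, one_div_one_div,
      Real.rpow_sub_one hq.ne', div_mul_cancel₀ _ hq.ne']
  calc ∫⁻ x in Ioi (0:ℝ), ENNReal.ofReal (x ^ (-p)) * (∫⁻ t in Ioo (0:ℝ) x, f t) ^ p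
      ≤ ∫⁻ x in Ioi (0:ℝ), ENNReal.ofReal (q ^ (p - 1) * x ^ (-1 - 1 / q)) *
          ∫⁻ t in Ioo (0:ℝ) x, f t ^ p * ENNReal.ofReal (t ^ (1 / q)) := by
        refine setLIntegral_mono' measurableSet_Ioi fun x (hx : 0 < x) => ?_
        grw [setLIntegral_Ioo_rpow_le hpq hf hx, ← mul_assoc, ← ENNReal.ofReal_mul
          (Real.rpow_nonneg hx.le _), Real.mul_rpow hq.le (Real.rpow_nonneg hx.le _),
          ← Real.rpow_mul hx.le, mul_left_comm, ← Real.rpow_add hx, hexp]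
    _ = ∫⁻ t in Ioi (0:ℝ), f t ^ p * ENNReal.ofReal (t ^ (1 / q)) *
          ∫⁻ x in Ioi t, ENNReal.ofReal (q ^ (p - 1) * x ^ (-1 - 1 / q)) :=
        lintegral_Ioi_mul_setLIntegral_Ioo (by fun_prop) (by fun_prop)
    _ = ENNReal.ofReal (q ^ p) * ∫⁻ t in Ioi (0:ℝ), f t ^ p := by
        rw [← lintegral_const_mul' _ _ ENNReal.ofReal_ne_top]
        refine setLIntegral_congr_fun measurableSet_Ioi fun t ht => ?_
        rw [mul_assoc, htail t ht, mul_comm]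

end Hardy

theorem lintegral_lintegral_kernel_mul_hardy_le {p q σ τ lam : ℝ} (hpq : p.HolderConjugate q)
    (hσ : 0 < σ) (hτ : 0 < τ) (hστ : σ + τ = lam) (hlam : lam < 1) {f : ℝ → ℝ≥0∞}
    (hf : Measurable f) :
    ∫⁻ x in Ioi (0:ℝ), ∫⁻ y in Ioi (0:ℝ), ENNReal.ofReal (x ^ (σ - p) * y ^ (τ - 1) *
        |x - y| ^ (-lam)) * (∫⁻ t in Ioo (0:ℝ) x, f t) ^ p ≤
      ENNReal.ofReal (betaFn σ (1 - lam) + betaFn τ (1 - lam)) *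
        (ENNReal.ofReal (q ^ p) * ∫⁻ t in Ioi (0:ℝ), f t ^ p) := by
  set C := ENNReal.ofReal (betaFn σ (1 - lam) + betaFn τ (1 - lam))
  calc _ = ∫⁻ x in Ioi (0:ℝ), C * (ENNReal.ofReal (x ^ (-p)) * (∫⁻ t in Ioo (0:ℝ) x, f t) ^ p) := by
        refine setLIntegral_congr_fun measurableSet_Ioi fun x (hx : 0 < x) => ?_
        simp_rw [mul_assoc (x ^ (σ - p)), ENNReal.ofReal_mul (Real.rpow_nonneg hx.le _)]
        rw [lintegral_mul_const _ (by fun_prop), lintegral_const_mul' _ _ ENNReal.ofReal_ne_top,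
          lintegral_Ioi_rpow_mul_abs_sub_rpow hτ (by linarith) hlam hx,
          show lam - τ = σ by linarith, add_comm (betaFn τ _), ← mul_assoc,
          ← ENNReal.ofReal_mul (Real.rpow_nonneg hx.le _), ← Real.rpow_add hx,
          show σ - p + (τ - lam) = -p by linarith, mul_comm (ENNReal.ofReal _) C, mul_assoc]
    _ = C * ∫⁻ x in Ioi (0:ℝ), ENNReal.ofReal (x ^ (-p)) * (∫⁻ t in Ioo (0:ℝ) x, f t) ^ p :=
        lintegral_const_mul' _ _ ENNReal.ofReal_ne_top
    _ ≤ C * (ENNReal.ofReal (q ^ p) * ∫⁻ t in Ioi (0:ℝ), f t ^ p) := by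
        gcongr
        exact hardy_lintegral_le hpq hf

lemma lintegral_lintegral_rpow_mul_rpow_le {α β : Type*} [MeasurableSpace α] [MeasurableSpace β]
    {μ : Measure α} {ν : Measure β} [SFinite ν] {p q : ℝ} (hpq : p.HolderConjugate q)
    {A B : α → β → ℝ≥0∞} (hA : AEMeasurable (Function.uncurry A) (μ.prod ν))
    (hB : AEMeasurable (Function.uncurry B) (μ.prod ν)) :
    ∫⁻ x, ∫⁻ y, A x y ^ (1 / p) * B x y ^ (1 / q) ∂ν ∂μ ≤
      (∫⁻ x, ∫⁻ y, A x y ∂ν ∂μ) ^ (1 / p) * (∫⁻ x, ∫⁻ y, B x y ∂ν ∂μ) ^ (1 / q) := by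
  rw [lintegral_lintegral hA, lintegral_lintegral hB,
    lintegral_lintegral ((hA.pow_const _).mul (hB.pow_const _))]
  exact ENNReal.lintegral_mul_norm_pow_le hA hB (one_div_nonneg.2 hpq.nonneg)
    (one_div_nonneg.2 hpq.symm.nonneg) (hpq.one_div_add_one_div.trans (div_one 1))

lemma rpow_mul_abs_sub_rpow_eq_rpow_mul_rpow {p q r s lam x y : ℝ} (hpq : p.HolderConjugate q)
    (hx : 0 < x) (hy : 0 < y) (hxy : x ≠ y) :
    x ^ (r - 1 / q - 1) * y ^ (s - 1 / p - 1) / |x - y| ^ lam =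
      (x ^ (r - p) * y ^ (s - 1) * |x - y| ^ (-lam)) ^ (1 / p) *
        (x ^ (r - 1) * y ^ (s - q) * |x - y| ^ (-lam)) ^ (1 / q) := by
  have hd : 0 < |x - y| := abs_pos.2 (sub_ne_zero.2 hxy)
  have hsplit : ∀ {u : ℝ}, 0 < u → ∀ α β : ℝ,
      (u ^ α) ^ (1 / p) * (u ^ β) ^ (1 / q) = u ^ (α / p + β / q) := fun hu α β => by
    rw [← Real.rpow_mul hu.le, ← Real.rpow_mul hu.le, ← Real.rpow_add hu]
    ring_nf
  have hconj : p + q = p * q := hpq.mul_eq_add.symm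
  have hp := hpq.pos.ne'
  have hq := hpq.symm.pos.ne'
  rw [Real.mul_rpow (by positivity) (by positivity), Real.mul_rpow (by positivity) (by positivity),
    Real.mul_rpow (by positivity) (by positivity), Real.mul_rpow (by positivity) (by positivity)]
  calc x ^ (r - 1 / q - 1) * y ^ (s - 1 / p - 1) / |x - y| ^ lam
      = x ^ ((r - p) / p + (r - 1) / q) * y ^ ((s - 1) / p + (s - q) / q) *
          |x - y| ^ (-lam / p + -lam / q) := by
        rw [div_eq_mul_inv, ← Real.rpow_neg hd.le]
        congr 3
        · field_simp
          linear_combination (-r) * hconj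
        · field_simp
          linear_combination (-s) * hconj
        · field_simp
          linear_combination lam * hconj
    _ = _ := by rw [← hsplit hx, ← hsplit hy, ← hsplit hd]; ring

lemma ofReal_mul_rpow_rpow_one_div {k t : ℝ} {C : ℝ≥0∞} (hk : 0 ≤ k) (ht : 0 < t) :
    (ENNReal.ofReal k * C ^ t) ^ (1 / t) = ENNReal.ofReal (k ^ (1 / t)) * C := by
  rw [ENNReal.mul_rpow_of_nonneg _ _ (by positivity),
    ENNReal.ofReal_rpow_of_nonneg hk (by positivity), ← ENNReal.rpow_mul,
    mul_one_div_cancel ht.ne', ENNReal.rpow_one]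

lemma ofReal_kernel_mul_le_rpow_mul_rpow {p q r s lam x y a b : ℝ} {A B : ℝ≥0∞}
    (hpq : p.HolderConjugate q) (hlam : 0 < lam) (hx : 0 < x) (hy : 0 < y) (ha : 0 ≤ a)
    (hA : ENNReal.ofReal a ≤ A) (hB : ENNReal.ofReal b ≤ B) :
    ENNReal.ofReal (x ^ (r - 1 / q - 1) * y ^ (s - 1 / p - 1) * a * b / |x - y| ^ lam) ≤
      (ENNReal.ofReal (x ^ (r - p) * y ^ (s - 1) * |x - y| ^ (-lam)) * A ^ p) ^ (1 / p) *
        (ENNReal.ofReal (x ^ (r - 1) * y ^ (s - q) * |x - y| ^ (-lam)) * B ^ q) ^ (1 / q) := by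
  rcases eq_or_ne x y with rfl | hxy
  · simp [Real.zero_rpow hlam.ne'] -- the left side is `ENNReal.ofReal (_ / 0) = 0`
  have hk : 0 ≤ x ^ (r - 1 / q - 1) * y ^ (s - 1 / p - 1) / |x - y| ^ lam := by positivity
  rw [ofReal_mul_rpow_rpow_one_div (by positivity) hpq.pos,
    ofReal_mul_rpow_rpow_one_div (by positivity) hpq.symm.pos]
  calc ENNReal.ofReal (x ^ (r - 1 / q - 1) * y ^ (s - 1 / p - 1) * a * b / |x - y| ^ lam)
      = ENNReal.ofReal (x ^ (r - 1 / q - 1) * y ^ (s - 1 / p - 1) / |x - y| ^ lam) *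
          ENNReal.ofReal a * ENNReal.ofReal b := by
        rw [← ENNReal.ofReal_mul hk, ← ENNReal.ofReal_mul (mul_nonneg hk ha)]
        ring_nf
    _ ≤ ENNReal.ofReal (x ^ (r - 1 / q - 1) * y ^ (s - 1 / p - 1) / |x - y| ^ lam) * A * B := by
        gcongr
    _ = _ := by
        rw [rpow_mul_abs_sub_rpow_eq_rpow_mul_rpow hpq hx hy hxy,
          ENNReal.ofReal_mul (by positivity)]
        ring

lemma ofReal_rpow_mul_rpow_eq {p q : ℝ} (hpq : p.HolderConjugate q) {C a b : ℝ} (hC : 0 ≤ C)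
    (ha : 0 ≤ a) (hb : 0 ≤ b) :
    (ENNReal.ofReal C * (ENNReal.ofReal (q ^ p) * ENNReal.ofReal a)) ^ (1 / p) *
        (ENNReal.ofReal C * (ENNReal.ofReal (p ^ q) * ENNReal.ofReal b)) ^ (1 / q) =
      ENNReal.ofReal (p * q * C * a ^ (1 / p) * b ^ (1 / q)) := by
  obtain ⟨hp, hq⟩ : 0 < p ∧ 0 < q := ⟨hpq.pos, hpq.symm.pos⟩
  simp only [← ENNReal.ofReal_mul hC, ← ENNReal.ofReal_mul (Real.rpow_nonneg hq.le _),
    ← ENNReal.ofReal_mul (Real.rpow_nonneg hp.le _)]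
  rw [ENNReal.ofReal_rpow_of_nonneg (by positivity) (by positivity),
    ENNReal.ofReal_rpow_of_nonneg (by positivity) (by positivity),
    ← ENNReal.ofReal_mul (by positivity)]
  congr 1
  rw [Real.mul_rpow hC (by positivity), Real.mul_rpow hC (by positivity),
    Real.mul_rpow (by positivity) ha, Real.mul_rpow (by positivity) hb,
    ← Real.rpow_mul hq.le, ← Real.rpow_mul hp.le, mul_one_div_cancel hp.ne',
    mul_one_div_cancel hq.ne', Real.rpow_one, Real.rpow_one]
  calc C ^ (1 / p) * (q * a ^ (1 / p)) * (C ^ (1 / q) * (p * b ^ (1 / q)))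
      = p * q * C ^ (1 / p + 1 / q) * a ^ (1 / p) * b ^ (1 / q) := by
        rw [Real.rpow_add' hC (by rw [hpq.one_div_add_one_div]; norm_num)]
        ring
    _ = _ := by rw [hpq.one_div_add_one_div, div_one, Real.rpow_one]

theorem hardy_hilbert_abs_sub_kernel_general
    (p q lam r s : ℝ) (hp : 1 < p) (hpq : 1 / p + 1 / q = 1)
    (hlam1 : lam < 1)
    (hr : 0 < r) (hs : 0 < s) (hrs : r + s = lam)
    (f g : ℝ → ℝ) (hf_meas : Measurable f) (hg_meas : Measurable g)
    (hf_nonneg : ∀ x, 0 ≤ f x) (hg_nonneg : ∀ x, 0 ≤ g x)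
    (hf_int : IntegrableOn (fun x => f x ^ p) (Ioi (0:ℝ)))
    (hg_int : IntegrableOn (fun x => g x ^ q) (Ioi (0:ℝ)))
    (F G : ℝ → ℝ)
    (hF : ∀ x, F x = ∫ t in (0:ℝ)..x, f t)
    (hG : ∀ y, G y = ∫ t in (0:ℝ)..y, g t) :
    ∫⁻ x in Ioi (0:ℝ), ∫⁻ y in Ioi (0:ℝ),
        ENNReal.ofReal (x ^ (r - 1 / q - 1) * y ^ (s - 1 / p - 1) * F x * G y / |x - y| ^ lam)
      ≤ ENNReal.ofReal (p * q * (betaFn r (1 - lam) + betaFn s (1 - lam)) *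
          (∫ x in Ioi (0:ℝ), f x ^ p) ^ (1 / p) *
          (∫ x in Ioi (0:ℝ), g x ^ q) ^ (1 / q)) := by
  have hconj : p.HolderConjugate q :=
    Real.holderConjugate_iff.2 ⟨hp, by simpa only [one_div] using hpq⟩
  set Φ : ℝ → ℝ≥0∞ := fun x => ∫⁻ t in Ioo (0:ℝ) x, ENNReal.ofReal (f t)
  set Ψ : ℝ → ℝ≥0∞ := fun y => ∫⁻ t in Ioo (0:ℝ) y, ENNReal.ofReal (g t)
  have hΦ : Measurable Φ := measurable_setLIntegral_Ioo_zero _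
  have hΨ : Measurable Ψ := measurable_setLIntegral_Ioo_zero _
  calc _ ≤ ∫⁻ x in Ioi (0:ℝ), ∫⁻ y in Ioi (0:ℝ),
          (ENNReal.ofReal (x ^ (r - p) * y ^ (s - 1) * |x - y| ^ (-lam)) * Φ x ^ p) ^ (1 / p) *
          (ENNReal.ofReal (x ^ (r - 1) * y ^ (s - q) * |x - y| ^ (-lam)) * Ψ y ^ q) ^ (1 / q) := by
        refine setLIntegral_mono' measurableSet_Ioi fun x (hx : 0 < x) =>
          setLIntegral_mono' measurableSet_Ioi fun y (hy : 0 < y) => ?_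
        refine ofReal_kernel_mul_le_rpow_mul_rpow hconj (by linarith) hx hy ?_ ?_ ?_
        · rw [hF]; exact intervalIntegral.integral_nonneg hx.le fun t _ => hf_nonneg t
        · rw [hF]; exact ofReal_intervalIntegral_le_setLIntegral_Ioo hf_nonneg hx.le
        · rw [hG]; exact ofReal_intervalIntegral_le_setLIntegral_Ioo hg_nonneg hy.le
    _ ≤ _ := lintegral_lintegral_rpow_mul_rpow_le hconj (by fun_prop) (by fun_prop)
    _ ≤ _ := by
        have hp0 := hconj.pos.le
        have hq0 := hconj.symm.pos.le
        gcongr ?_ ^ _ * ?_ ^ _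
        · grw [lintegral_lintegral_kernel_mul_hardy_le hconj hr hs hrs hlam1 (by fun_prop),
            lintegral_ofReal_rpow_eq_ofReal_integral hf_nonneg hp0 hf_int]
        · rw [lintegral_lintegral_swap (by fun_prop)]
          simp_rw [mul_comm (_ ^ (r - 1)), abs_sub_comm _ (_ : ℝ)]
          grw [lintegral_lintegral_kernel_mul_hardy_le hconj.symm hs hr (by linarith) hlam1
            (by fun_prop), lintegral_ofReal_rpow_eq_ofReal_integral hg_nonneg hq0 hg_int, add_comm]
    _ = _ := ofReal_rpow_mul_rpow_eq hconj (add_nonneg (betaFn_nonneg _ _) (betaFn_nonneg _ _))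
      (integral_nonneg fun t => Real.rpow_nonneg (hf_nonneg t) p)
      (integral_nonneg fun t => Real.rpow_nonneg (hg_nonneg t) q)

theorem hardy_hilbert_abs_sub_kernel
    (p q lam r s : ℝ) (hp : 1 < p) (hpq : 1 / p + 1 / q = 1)
    (hlam0 : 0 < lam) (hlam1 : lam < 1)
    (hr : 0 < r) (hs : 0 < s) (hrs : r + s = lam)
    (f g : ℝ → ℝ) (hf_meas : Measurable f) (hg_meas : Measurable g)
    (hf_nonneg : ∀ x, 0 ≤ f x) (hg_nonneg : ∀ x, 0 ≤ g x)
    (hf_int : IntegrableOn (fun x => f x ^ p) (Ioi (0:ℝ)))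
    (hg_int : IntegrableOn (fun x => g x ^ q) (Ioi (0:ℝ)))
    (hf_pos : 0 < ∫ x in Ioi (0:ℝ), f x ^ p)
    (hg_pos : 0 < ∫ x in Ioi (0:ℝ), g x ^ q)
    (F G : ℝ → ℝ)
    (hF : ∀ x, F x = ∫ t in (0:ℝ)..x, f t)
    (hG : ∀ y, G y = ∫ t in (0:ℝ)..y, g t) :
    ∫⁻ x in Ioi (0:ℝ), ∫⁻ y in Ioi (0:ℝ),
        ENNReal.ofReal (x ^ (r - 1 / q - 1) * y ^ (s - 1 / p - 1) * F x * G y / |x - y| ^ lam)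
      ≤ ENNReal.ofReal (p * q * (betaFn r (1 - lam) + betaFn s (1 - lam)) *
          (∫ x in Ioi (0:ℝ), f x ^ p) ^ (1 / p) *
          (∫ x in Ioi (0:ℝ), g x ^ q) ^ (1 / q)) :=
  hardy_hilbert_abs_sub_kernel_general p q lam r s hp hpq hlam1 hr hs hrs f g hf_meas hg_meas
    hf_nonneg hg_nonneg hf_int hg_int F G hF hG
end
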